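/- arXiv:1701.06064 — 6 statements merged into one kernel-verified Lean document; each statement's English description precedes it below -/
import Mathlib

section
/- Let n ≥ 1 and let M be the (2n+3) × 3n real matrix whose columns are indexed by three consecutive blocks of size n (the x-block, z-block, z̄-block) and whose rows are: row a₁ with entry 1 in every x-column and 0 elsewhere; row a₂ with entry 1 in every z-column and 0 elsewhere; row a₃ with entry 1 in every z̄-column and 0 elsewhere; for each i ∈ [n], row b_i with entry 1 in the i-th x-column and 1 in the i-th z-column and 0 elsewhere; and row c_i with entry 1 in the i-th x-column and 1 in the i-th z̄-column and 0 elsewhere. Then M is totally unimodular. -/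
/-!
A square submatrix with a row or column that has at most one nonzero entry reduces, by Laplace
expansion, to a smaller square submatrix; so by induction on the size only submatrices in which
every row and column has two nonzero entries matter. For these the selected rows and columns are
closed under the incidences of the matrix. The columns satisfy `x_j - z_j - z̄_j = a₁ - a₂ - a₃`
for every `j`, so if both `b_j` and `c_j` are selected for two indices `j` the selected columns
are dependent. Otherwise `a₁` is selected (chasing incidences from any selected column would
produce two such indices), and adding the selected `a`-rows and subtracting the selected `b`- and
`c`-rows gives the zero row, or minus the unit row at `x_j` for the one index `j` with `b_j` and
`c_j` selected; the determinant is then `0` or `±` a smaller minor.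
-/

noncomputable section

/-- The coefficient matrix of problem (19) (Table 3).  Columns are three blocks
of size `n`: the `x`-block (`0 ≤ c < n`), the `z`-block (`n ≤ c < 2n`) and the
`z̄`-block (`2n ≤ c < 3n`).  Rows are `a₁, a₂, a₃` followed by the blocks
`b_i` and `c_i` for `i ∈ [n]`. -/
def M11 (n : ℕ) : Matrix (Fin (2 * n + 3)) (Fin (3 * n)) ℝ := fun r c =>
  if r.val = 0 then (if c.val < n then 1 else 0)
  else if r.val = 1 then (if n ≤ c.val ∧ c.val < 2 * n then 1 else 0)
  else if r.val = 2 then (if 2 * n ≤ c.val then 1 else 0)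
  else if r.val < 3 + n then
    -- row `b_i` with `i = r.val - 3`
    (if c.val = r.val - 3 then 1
     else if c.val = n + (r.val - 3) then 1 else 0)
  else
    -- row `c_i` with `i = r.val - 3 - n`
    (if c.val = r.val - 3 - n then 1
     else if c.val = 2 * n + (r.val - 3 - n) then 1 else 0)

lemma neg_one_pow_mul_mul_mem_range_signType_cast {R : Type*} [Ring R] {s d : R} (a : ℕ)
    (hs : s ∈ Set.range SignType.cast) (hd : d ∈ Set.range SignType.cast) :
    (-1) ^ a * s * d ∈ Set.range SignType.cast := by
  obtain ⟨u, rfl⟩ := hs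
  obtain ⟨v, rfl⟩ := hd
  exact ⟨(-1) ^ a * u * v, by simp⟩

namespace Matrix

variable {m n R : Type*} [CommRing R]

def TwoNonzerosPerLine (A : Matrix m n R) (I : Set m) (J : Set n) : Prop :=
  (∀ j ∈ J, ∀ i, ∃ i' ∈ I, i' ≠ i ∧ A i' j ≠ 0) ∧ (∀ i ∈ I, ∀ j, ∃ j' ∈ J, j' ≠ j ∧ A i j' ≠ 0)

theorem comp_vecMul_submatrix {ι ι' : Type*} [Fintype m] [Fintype ι] (A : Matrix m n R)
    {f : ι → m} (hf : f.Injective) (g : ι' → n) {c : m → R}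
    (hc : ∀ i ∉ Set.range f, c i = 0) :
    (c ∘ f) ᵥ* A.submatrix f g = (c ᵥ* A) ∘ g := by
  ext p
  exact Fintype.sum_of_injective f hf _ _ (fun i hi => by simp [hc i hi]) fun _ => rfl

theorem det_succ_eq_of_vecMul_eq_single {k : ℕ} (S : Matrix (Fin (k + 1)) (Fin (k + 1)) R)
    {c : Fin (k + 1) → R} {i₀ p₀ : Fin (k + 1)} {s : R} (hc : c i₀ = 1)
    (h : c ᵥ* S = Pi.single p₀ s) :
    S.det = (-1) ^ (i₀ + p₀ : ℕ) * s * (S.submatrix i₀.succAbove p₀.succAbove).det := by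
  have hrow : ∑ i, c i • S i = Pi.single p₀ s := by
    rw [← h]
    ext p
    simp [vecMul, dotProduct]
  have hupdate := det_updateRow_sum S i₀ c
  rw [hrow, hc, one_smul] at hupdate
  rw [← hupdate, det_succ_row _ i₀, Fintype.sum_eq_single p₀ fun p hp => by simp [hp]]
  simp [submatrix_updateRow_succAbove]

lemma det_submatrix_mem_of_row_supported {A : Matrix m n R}
    (hA : ∀ i j, A i j ∈ Set.range SignType.cast) {k : ℕ} {f : Fin (k + 1) → m}
    {g : Fin (k + 1) → n} (hf : f.Injective) (hg : g.Injective)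
    (hminor : ∀ (f' : Fin k → m) (g' : Fin k → n), f'.Injective → g'.Injective →
      (A.submatrix f' g').det ∈ Set.range SignType.cast)
    {i : m} (hi : i ∈ Set.range f) (j : n) (hij : ∀ j' ∈ Set.range g, j' ≠ j → A i j' = 0) :
    (A.submatrix f g).det ∈ Set.range SignType.cast := by
  classical
  obtain ⟨i₀, rfl⟩ := hi
  obtain ⟨p₀, hp₀⟩ : ∃ p₀, ∀ p, p ≠ p₀ → g p ≠ j := by
    by_cases hj : j ∈ Set.range g
    · obtain ⟨p₀, rfl⟩ := hj
      exact ⟨p₀, fun p hp => hg.ne hp⟩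
    · exact ⟨0, fun p _ hp => hj ⟨p, hp⟩⟩
  have hrow : Pi.single i₀ 1 ᵥ* A.submatrix f g = Pi.single p₀ (A (f i₀) (g p₀)) := by
    rw [single_one_vecMul]
    ext p
    by_cases hp : p = p₀
    · subst hp; simp
    · simp [hp, hij (g p) ⟨p, rfl⟩ (hp₀ p hp)]
  rw [det_succ_eq_of_vecMul_eq_single _ (Pi.single_eq_same i₀ 1) hrow]
  exact neg_one_pow_mul_mul_mem_range_signType_cast _ (hA _ _)
    (hminor _ _ (hf.comp Fin.succAbove_right_injective) (hg.comp Fin.succAbove_right_injective))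

theorem isTotallyUnimodular_of_twoNonzerosPerLine {A : Matrix m n R}
    (hA : ∀ i j, A i j ∈ Set.range SignType.cast)
    (h : ∀ (k : ℕ) (f : Fin (k + 1) → m) (g : Fin (k + 1) → n), f.Injective → g.Injective →
      (∀ (f' : Fin k → m) (g' : Fin k → n), f'.Injective → g'.Injective →
        (A.submatrix f' g').det ∈ Set.range SignType.cast) →
      A.TwoNonzerosPerLine (Set.range f) (Set.range g) →
      (A.submatrix f g).det ∈ Set.range SignType.cast) :
    A.IsTotallyUnimodular := by
  intro k
  induction k with
  | zero => exact fun _ _ _ _ => ⟨1, by simp⟩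
  | succ k ih =>
    intro f g hf hg
    by_cases hlines : A.TwoNonzerosPerLine (Set.range f) (Set.range g)
    · exact h k f g hf hg ih hlines
    rw [TwoNonzerosPerLine, not_and_or] at hlines
    push Not at hlines
    rcases hlines with ⟨j, hj, i, hcol⟩ | ⟨i, hi, j, hrow⟩
    · rw [← det_transpose, transpose_submatrix]
      exact det_submatrix_mem_of_row_supported (A := Aᵀ) (fun j i => hA i j) hg hf
        (fun g' f' hg' hf' => by rw [← transpose_submatrix, det_transpose]; exact ih f' g' hf' hg')
        hj i hcol
    · exact det_submatrix_mem_of_row_supported hA hf hg ih hi j hrow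

end Matrix

namespace M11

open Matrix

/- `inl k` is the row `a_(k+1)`, `inr (inl i)` is `b_i` and `inr (inr i)` is `c_i`; the columns
`inl j`, `inr (inl j)`, `inr (inr j)` are `x_j`, `z_j`, `z̄_j`. -/
abbrev Row (n : ℕ) := Fin 3 ⊕ (Fin n ⊕ Fin n)
abbrev Col (n : ℕ) := Fin n ⊕ (Fin n ⊕ Fin n)

variable (R : Type*) [CommRing R]

def block (n : ℕ) : Matrix (Row n) (Col n) R := Matrix.of fun
  | .inl a, .inl _ => if a = 0 then 1 else 0
  | .inl a, .inr (.inl _) => if a = 1 then 1 else 0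
  | .inl a, .inr (.inr _) => if a = 2 then 1 else 0
  | .inr (.inl i), .inl j => if i = j then 1 else 0
  | .inr (.inl i), .inr (.inl j) => if i = j then 1 else 0
  | .inr (.inr i), .inl j => if i = j then 1 else 0
  | .inr (.inr i), .inr (.inr j) => if i = j then 1 else 0
  | _, _ => 0

variable {n : ℕ}

lemma block_apply_mem (r : Row n) (c : Col n) : block R n r c ∈ Set.range SignType.cast := by
  rcases r with a | i | i <;> rcases c with j | j | j <;> simp only [block, of_apply] <;>
    (try split_ifs) <;> first | exact ⟨0, rfl⟩ | exact ⟨1, rfl⟩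

variable {R}

lemma block_ne_zero_x {r : Row n} {j : Fin n} (h : block R n r (.inl j) ≠ 0) :
    r = .inl 0 ∨ r = .inr (.inl j) ∨ r = .inr (.inr j) := by
  contrapose! h
  rcases r with a | i | i <;> simp_all [block]

lemma block_ne_zero_z {r : Row n} {j : Fin n} (h : block R n r (.inr (.inl j)) ≠ 0) :
    r = .inl 1 ∨ r = .inr (.inl j) := by
  contrapose! h
  rcases r with a | i | i <;> simp_all [block]

lemma block_ne_zero_zb {r : Row n} {j : Fin n} (h : block R n r (.inr (.inr j)) ≠ 0) :
    r = .inl 2 ∨ r = .inr (.inr j) := by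
  contrapose! h
  rcases r with a | i | i <;> simp_all [block]

lemma block_ne_zero_a2 {c : Col n} (h : block R n (.inl 1) c ≠ 0) : ∃ j, c = .inr (.inl j) := by
  rcases c with j | j | j <;> simp_all [block]

lemma block_ne_zero_a3 {c : Col n} (h : block R n (.inl 2) c ≠ 0) : ∃ j, c = .inr (.inr j) := by
  rcases c with j | j | j <;> simp_all [block]

lemma block_ne_zero_b {i : Fin n} {c : Col n} (h : block R n (.inr (.inl i)) c ≠ 0) :
    c = .inl i ∨ c = .inr (.inl i) := by
  contrapose! h
  rcases c with j | j | j <;> simp_all [block, eq_comm]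

lemma block_ne_zero_c {i : Fin n} {c : Col n} (h : block R n (.inr (.inr i)) c ≠ 0) :
    c = .inl i ∨ c = .inr (.inr i) := by
  contrapose! h
  rcases c with j | j | j <;> simp_all [block, eq_comm]

lemma vecMul_block_x (v : Row n → R) (j : Fin n) :
    (v ᵥ* block R n) (.inl j) = v (.inl 0) + v (.inr (.inl j)) + v (.inr (.inr j)) := by
  simp [vecMul, dotProduct, block, add_assoc]

lemma vecMul_block_z (v : Row n → R) (j : Fin n) :
    (v ᵥ* block R n) (.inr (.inl j)) = v (.inl 1) + v (.inr (.inl j)) := by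
  simp [vecMul, dotProduct, block]

lemma vecMul_block_zb (v : Row n → R) (j : Fin n) :
    (v ᵥ* block R n) (.inr (.inr j)) = v (.inl 2) + v (.inr (.inr j)) := by
  simp [vecMul, dotProduct, block]

def colDefect (j : Fin n) : Col n → R :=
  Pi.single (.inl j) 1 - Pi.single (.inr (.inl j)) 1 - Pi.single (.inr (.inr j)) 1

lemma block_mulVec_colDefect (j : Fin n) :
    block R n *ᵥ colDefect j =
      Pi.single (.inl 0) 1 - Pi.single (.inl 1) 1 - Pi.single (.inl 2) 1 := by
  ext r
  rcases r with a | i | i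
  · fin_cases a <;> simp [colDefect, mulVec_sub, block]
  · simp [colDefect, mulVec_sub, block]
  · simp [colDefect, mulVec_sub, block]

variable {I : Set (Row n)} {J : Set (Col n)} {j : Fin n}

lemma rows_of_z_mem (h : (block R n).TwoNonzerosPerLine I J) (hz : .inr (.inl j) ∈ J) :
    .inl 1 ∈ I ∧ .inr (.inl j) ∈ I := by
  obtain ⟨r, hr, hne, hrz⟩ := h.1 _ hz (.inr (.inl j))
  obtain ⟨r', hr', hne', hrz'⟩ := h.1 _ hz (.inl 1)
  exact ⟨(block_ne_zero_z hrz).resolve_right hne ▸ hr,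
    (block_ne_zero_z hrz').resolve_left hne' ▸ hr'⟩

lemma rows_of_zb_mem (h : (block R n).TwoNonzerosPerLine I J) (hz : .inr (.inr j) ∈ J) :
    .inl 2 ∈ I ∧ .inr (.inr j) ∈ I := by
  obtain ⟨r, hr, hne, hrz⟩ := h.1 _ hz (.inr (.inr j))
  obtain ⟨r', hr', hne', hrz'⟩ := h.1 _ hz (.inl 2)
  exact ⟨(block_ne_zero_zb hrz).resolve_right hne ▸ hr,
    (block_ne_zero_zb hrz').resolve_left hne' ▸ hr'⟩

lemma b_or_c_of_x_mem (h : (block R n).TwoNonzerosPerLine I J) (hx : .inl j ∈ J) :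
    .inr (.inl j) ∈ I ∨ .inr (.inr j) ∈ I := by
  obtain ⟨r, hr, hne, hrx⟩ := h.1 _ hx (.inl 0)
  rcases (block_ne_zero_x hrx).resolve_left hne with rfl | rfl
  exacts [.inl hr, .inr hr]

lemma b_and_c_of_x_mem (h : (block R n).TwoNonzerosPerLine I J) (hx : .inl j ∈ J)
    (ha : .inl 0 ∉ I) : .inr (.inl j) ∈ I ∧ .inr (.inr j) ∈ I := by
  obtain ⟨r, hr, hne, hrx⟩ := h.1 _ hx (.inr (.inr j))
  obtain ⟨r', hr', hne', hrx'⟩ := h.1 _ hx (.inr (.inl j))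
  rcases block_ne_zero_x hrx with rfl | rfl | rfl <;>
    rcases block_ne_zero_x hrx' with rfl | rfl | rfl <;> simp_all

lemma cols_of_b_mem (h : (block R n).TwoNonzerosPerLine I J) (hb : .inr (.inl j) ∈ I) :
    .inl j ∈ J ∧ .inr (.inl j) ∈ J := by
  obtain ⟨c, hc, hne, hbc⟩ := h.2 _ hb (.inr (.inl j))
  obtain ⟨c', hc', hne', hbc'⟩ := h.2 _ hb (.inl j)
  exact ⟨(block_ne_zero_b hbc).resolve_right hne ▸ hc,
    (block_ne_zero_b hbc').resolve_left hne' ▸ hc'⟩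

lemma cols_of_c_mem (h : (block R n).TwoNonzerosPerLine I J) (hc : .inr (.inr j) ∈ I) :
    .inl j ∈ J ∧ .inr (.inr j) ∈ J := by
  obtain ⟨d, hd, hne, hcd⟩ := h.2 _ hc (.inr (.inr j))
  obtain ⟨d', hd', hne', hcd'⟩ := h.2 _ hc (.inl j)
  exact ⟨(block_ne_zero_c hcd).resolve_right hne ▸ hd,
    (block_ne_zero_c hcd').resolve_left hne' ▸ hd'⟩

lemma exists_z_ne_of_a2_mem (h : (block R n).TwoNonzerosPerLine I J) (ha : .inl 1 ∈ I)
    (j : Fin n) :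
    ∃ j', j' ≠ j ∧ .inr (.inl j') ∈ J := by
  obtain ⟨c, hc, hne, hac⟩ := h.2 _ ha (.inr (.inl j))
  obtain ⟨j', rfl⟩ := block_ne_zero_a2 hac
  exact ⟨j', fun h => hne (h ▸ rfl), hc⟩

lemma exists_zb_ne_of_a3_mem (h : (block R n).TwoNonzerosPerLine I J) (ha : .inl 2 ∈ I)
    (j : Fin n) :
    ∃ j', j' ≠ j ∧ .inr (.inr j') ∈ J := by
  obtain ⟨c, hc, hne, hac⟩ := h.2 _ ha (.inr (.inr j))
  obtain ⟨j', rfl⟩ := block_ne_zero_a3 hac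
  exact ⟨j', fun h => hne (h ▸ rfl), hc⟩

def PairSelected (I : Set (Row n)) (j : Fin n) : Prop := .inr (.inl j) ∈ I ∧ .inr (.inr j) ∈ I

lemma exists_pairSelected_of_a1_not_mem (h : (block R n).TwoNonzerosPerLine I J)
    (ha : .inl 0 ∉ I) (hJ : J.Nonempty) :
    ∃ j₁ j₂, j₁ ≠ j₂ ∧ PairSelected I j₁ ∧ PairSelected I j₂ := by
  have of_x : ∀ j, .inl j ∈ J → PairSelected I j := fun j hx => b_and_c_of_x_mem h hx ha
  have of_b : ∀ j, .inr (.inl j) ∈ I →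
      ∃ j₁ j₂, j₁ ≠ j₂ ∧ PairSelected I j₁ ∧ PairSelected I j₂ := by
    intro j hb
    obtain ⟨hx, hz⟩ := cols_of_b_mem h hb
    obtain ⟨j', hne, hz'⟩ := exists_z_ne_of_a2_mem h (rows_of_z_mem h hz).1 j
    exact ⟨j', j, hne, of_x j' (cols_of_b_mem h (rows_of_z_mem h hz').2).1, of_x j hx⟩
  have of_c : ∀ j, .inr (.inr j) ∈ I →
      ∃ j₁ j₂, j₁ ≠ j₂ ∧ PairSelected I j₁ ∧ PairSelected I j₂ := by
    intro j hc
    obtain ⟨hx, hzb⟩ := cols_of_c_mem h hc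
    obtain ⟨j', hne, hzb'⟩ := exists_zb_ne_of_a3_mem h (rows_of_zb_mem h hzb).1 j
    exact ⟨j', j, hne, of_x j' (cols_of_c_mem h (rows_of_zb_mem h hzb').2).1, of_x j hx⟩
  obtain ⟨c | c | c, hc⟩ := hJ
  exacts [of_b c (of_x c hc).1, of_b c (rows_of_z_mem h hc).2, of_c c (rows_of_zb_mem h hc).2]

lemma colDefect_apply_eq_zero (hJ : .inl j ∈ J ∧ .inr (.inl j) ∈ J ∧ .inr (.inr j) ∈ J)
    {c : Col n} (hc : c ∉ J) : colDefect (R := R) j c = 0 := by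
  obtain ⟨hx, hz, hzb⟩ := hJ
  simp [colDefect, (ne_of_mem_of_not_mem hx hc).symm,
    (ne_of_mem_of_not_mem hz hc).symm, (ne_of_mem_of_not_mem hzb hc).symm]

lemma det_submatrix_eq_zero_of_pairSelected {k : ℕ} (f : Fin (k + 1) → Row n)
    {g : Fin (k + 1) → Col n} (hg : g.Injective)
    (h : (block R n).TwoNonzerosPerLine (Set.range f) (Set.range g)) {j₁ j₂ : Fin n}
    (hne : j₁ ≠ j₂) (h₁ : PairSelected (Set.range f) j₁) (h₂ : PairSelected (Set.range f) j₂) :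
    ((block R n).submatrix f g).det = 0 := by
  have cols : ∀ j, PairSelected (Set.range f) j →
      .inl j ∈ Set.range g ∧ .inr (.inl j) ∈ Set.range g ∧ .inr (.inr j) ∈ Set.range g :=
    fun j hj => ⟨(cols_of_b_mem h hj.1).1, (cols_of_b_mem h hj.1).2, (cols_of_c_mem h hj.2).2⟩
  set d : Col n → R := colDefect j₁ - colDefect j₂
  obtain ⟨p₀, hp₀⟩ := (cols j₁ h₁).1
  have hd₀ : (d ∘ g) p₀ = 1 := by simp [d, hp₀, colDefect, hne]
  have hd : ∀ c ∉ Set.range g, d c = 0 := fun c hc => by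
    simp [d, colDefect_apply_eq_zero (cols j₁ h₁) hc, colDefect_apply_eq_zero (cols j₂ h₂) hc]
  have hcols : (d ∘ g) ᵥ* (block R n)ᵀ.submatrix g f = Pi.single p₀ 0 := by
    rw [comp_vecMul_submatrix _ hg f hd, vecMul_transpose, mulVec_sub, block_mulVec_colDefect,
      block_mulVec_colDefect, sub_self, Pi.single_zero]
    rfl
  rw [← det_transpose, transpose_submatrix, det_succ_eq_of_vecMul_eq_single _ hd₀ hcols,
    mul_zero, zero_mul]

def rowSign : Row n → R
  | .inl _ => 1
  | .inr _ => -1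

lemma indicator_rowSign_vecMul_block_of_pairSelected (ha : .inl 0 ∈ I) (hj : PairSelected I j) :
    (I.indicator rowSign ᵥ* block R n) (.inl j) = -1 := by
  simp [vecMul_block_x, ha, hj.1, hj.2, rowSign]

lemma indicator_rowSign_vecMul_block_eq_zero (h : (block R n).TwoNonzerosPerLine I J)
    (ha : .inl 0 ∈ I) {c : Col n} (hc : c ∈ J) (hsel : ∀ j, c = .inl j → ¬PairSelected I j) :
    (I.indicator rowSign ᵥ* block R n) c = 0 := by
  rcases c with j | j | j
  · have hbc := b_or_c_of_x_mem h hc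
    have := hsel j rfl
    rw [vecMul_block_x]
    by_cases hb : .inr (.inl j) ∈ I <;> by_cases hc' : .inr (.inr j) ∈ I <;>
      simp_all [PairSelected, rowSign]
  · obtain ⟨ha₂, hb⟩ := rows_of_z_mem h hc
    simp [vecMul_block_z, ha₂, hb, rowSign]
  · obtain ⟨ha₃, hc⟩ := rows_of_zb_mem h hc
    simp [vecMul_block_zb, ha₃, hc, rowSign]

lemma det_submatrix_mem_of_a1_mem {k : ℕ} {f : Fin (k + 1) → Row n} {g : Fin (k + 1) → Col n}
    (hf : f.Injective) (hg : g.Injective)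
    (hminor : ∀ (f' : Fin k → Row n) (g' : Fin k → Col n), f'.Injective → g'.Injective →
      ((block R n).submatrix f' g').det ∈ Set.range SignType.cast)
    (h : (block R n).TwoNonzerosPerLine (Set.range f) (Set.range g)) (ha : .inl 0 ∈ Set.range f)
    (hsel : ∀ j₁ j₂, PairSelected (Set.range f) j₁ → PairSelected (Set.range f) j₂ → j₁ = j₂) :
    ((block R n).submatrix f g).det ∈ Set.range SignType.cast := by
  set v : Row n → R := (Set.range f).indicator rowSign
  have hv₀ : v (.inl 0) = 1 := Set.indicator_of_mem ha _
  obtain ⟨i₀, hi₀⟩ := ha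
  have hv : (v ∘ f) i₀ = 1 := by rw [Function.comp_apply, hi₀, hv₀]
  have hS : (v ∘ f) ᵥ* (block R n).submatrix f g = (v ᵥ* block R n) ∘ g :=
    comp_vecMul_submatrix _ hf g fun r hr => Set.indicator_of_notMem hr _
  by_cases hpair : ∃ j, PairSelected (Set.range f) j
  · obtain ⟨j₀, hj₀⟩ := hpair
    obtain ⟨p₀, hp₀⟩ := (cols_of_b_mem h hj₀.1).1
    have hrow : (v ∘ f) ᵥ* (block R n).submatrix f g = Pi.single p₀ (-1) := by
      rw [hS]
      ext p
      by_cases hp : p = p₀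
      · subst hp
        simp only [Function.comp_apply, hp₀, Pi.single_eq_same]
        exact indicator_rowSign_vecMul_block_of_pairSelected ⟨i₀, hi₀⟩ hj₀
      · rw [Pi.single_eq_of_ne hp]
        refine indicator_rowSign_vecMul_block_eq_zero h ⟨i₀, hi₀⟩ ⟨p, rfl⟩
          fun j hj hsj => hp (hg ?_)
        rw [hj, hp₀, hsel j j₀ hsj hj₀]
    rw [det_succ_eq_of_vecMul_eq_single _ hv hrow]
    exact neg_one_pow_mul_mul_mem_range_signType_cast _ ⟨-1, by simp⟩
      (hminor _ _ (hf.comp Fin.succAbove_right_injective) (hg.comp Fin.succAbove_right_injective))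
  · have hrow : (v ∘ f) ᵥ* (block R n).submatrix f g = Pi.single 0 0 := by
      rw [hS, Pi.single_zero]
      ext p
      exact indicator_rowSign_vecMul_block_eq_zero h ⟨i₀, hi₀⟩ ⟨p, rfl⟩ fun j _ hj => hpair ⟨j, hj⟩
    rw [det_succ_eq_of_vecMul_eq_single _ hv hrow, mul_zero, zero_mul]
    exact ⟨0, SignType.coe_zero⟩

theorem block_isTotallyUnimodular : (block R n).IsTotallyUnimodular := by
  refine isTotallyUnimodular_of_twoNonzerosPerLine (block_apply_mem R)
    fun k f g hf hg hminor h => ?_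
  by_cases hpair : ∃ j₁ j₂, j₁ ≠ j₂ ∧ PairSelected (Set.range f) j₁ ∧ PairSelected (Set.range f) j₂
  · obtain ⟨j₁, j₂, hne, h₁, h₂⟩ := hpair
    rw [det_submatrix_eq_zero_of_pairSelected f hg h hne h₁ h₂]
    exact ⟨0, SignType.coe_zero⟩
  have ha : .inl 0 ∈ Set.range f := by
    by_contra ha
    exact hpair (exists_pairSelected_of_a1_not_mem h ha ⟨g 0, 0, rfl⟩)
  refine det_submatrix_mem_of_a1_mem hf hg hminor h ha fun j₁ j₂ h₁ h₂ => ?_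
  by_contra hne
  exact hpair ⟨j₁, j₂, hne, h₁, h₂⟩

def rowIndex (n : ℕ) (r : Fin (2 * n + 3)) : Row n :=
  if h : r.val < 3 then .inl ⟨r.val, h⟩
  else if h' : r.val < 3 + n then .inr (.inl ⟨r.val - 3, by omega⟩)
  else .inr (.inr ⟨r.val - 3 - n, by omega⟩)

def colIndex (n : ℕ) (c : Fin (3 * n)) : Col n :=
  if h : c.val < n then .inl ⟨c.val, h⟩
  else if h' : c.val < 2 * n then .inr (.inl ⟨c.val - n, by omega⟩)
  else .inr (.inr ⟨c.val - 2 * n, by omega⟩)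

theorem eq_submatrix_block (n : ℕ) : M11 n = (block ℝ n).submatrix (rowIndex n) (colIndex n) := by
  ext r c
  simp only [M11, submatrix_apply, rowIndex, colIndex]
  split_ifs <;> simp only [block, of_apply] <;> (try split_ifs) <;>
    first
    | rfl
    | exfalso
      (try simp only [Fin.ext_iff, Fin.val_zero, Fin.val_one, Fin.val_two] at *)
      omega

end M11

theorem stmt11_general (n : ℕ) : (M11 n).IsTotallyUnimodular := by
  rw [M11.eq_submatrix_block]
  exact M11.block_isTotallyUnimodular.submatrix _ _

/-- The coefficient matrix of problem (19) is totally unimodular. -/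
theorem stmt11 (n : ℕ) (hn : 1 ≤ n) : (M11 n).IsTotallyUnimodular :=
  stmt11_general n
end
end

section
/- Let n, p be integers with 1 ≤ p ≤ n, let c̲, d ∈ ℝ^n_{≥0}, let Γ be a nonnegative integer, and let x ∈ {0,1}^n with Σ_i x_i ≤ p. Consider the optimization problem: maximize (p − Σ_i x_i)·α − Σ_i (1 − x_i)·γ_i over α ≥ 0, γ ∈ ℝ^n with γ_i ≥ 0 for all i, and δ ∈ {0,1}^n, subject to α ≤ γ_i + c̲_i + d_i·δ_i for all i ∈ [n] and Σ_i δ_i ≤ Γ. Then there exists an optimal solution in which α = 0, or α = c̲_j for some j ∈ [n], or α = c̲_j + d_j for some j ∈ [n]. -/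
open Finset

/-!
For fixed `α` and `δ` the best `γ` is `γ_i = (α - c_i)⁺` with `c_i = c̲_i + d_i δ_i`, so the
objective becomes the piecewise affine function `α ↦ A α - ∑ b_i (α - c_i)⁺` with
`A = p - ∑ x_i ≤ ∑ b_i = ∑ (1 - x_i)`. It is affine between consecutive kinks `0, c_1, …, c_n`
and nonincreasing beyond the last one, so its supremum over `α ≥ 0` is attained at a kink.
Maximising over the finitely many pairs (kink, admissible `δ`) gives the optimal solution.
-/

section Hinge

variable {ι : Type*} [Fintype ι]

noncomputable def hingeValue (A : ℝ) (b C : ι → ℝ) (t : ℝ) : ℝ :=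
  A * t - ∑ i, b i * max (t - C i) 0

theorem hingeValue_eq_of_no_kink_between (A : ℝ) (b C : ι → ℝ) {s u : ℝ} (hsu : s ≤ u)
    (hC : ∀ i, C i ≤ s ∨ u ≤ C i) :
    hingeValue A b C u =
      hingeValue A b C s + (A - ∑ i with C i ≤ s, b i) * (u - s) := by
  have hterm : ∀ i, b i * max (u - C i) 0 =
      b i * max (s - C i) 0 + (if C i ≤ s then b i else 0) * (u - s) := by
    intro i
    rcases hC i with h | h
    · rw [if_pos h, max_eq_left (by linarith), max_eq_left (by linarith)]
      ring
    · by_cases h' : C i ≤ s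
      · rw [if_pos h', max_eq_left (by linarith), max_eq_left (by linarith)]
        ring
      · rw [if_neg h', max_eq_right (by linarith), max_eq_right (by linarith)]
        ring
  simp only [hingeValue, hterm, sum_add_distrib, ← sum_mul, sum_filter]
  ring

theorem exists_kink_hingeValue_ge {A : ℝ} {b C : ι → ℝ} (hAb : A ≤ ∑ i, b i)
    {α : ℝ} (hα : 0 ≤ α) :
    ∃ β ∈ insert 0 (univ.image C), hingeValue A b C α ≤ hingeValue A b C β := by
  classical
  set T := insert 0 (univ.image C)
  have hCT : ∀ i, C i ∈ T := fun i => mem_insert_of_mem (mem_image_of_mem C (mem_univ i))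
  have hbelow : (T.filter (· ≤ α)).Nonempty := ⟨0, mem_filter.2 ⟨mem_insert_self _ _, hα⟩⟩
  set β₁ := (T.filter (· ≤ α)).max' hbelow
  obtain ⟨hβ₁T, hβ₁α⟩ := mem_filter.1 ((T.filter (· ≤ α)).max'_mem hbelow)
  have hβ₁max : ∀ c ∈ T, c ≤ α → c ≤ β₁ := fun c hc hcα =>
    (T.filter (· ≤ α)).le_max' c (mem_filter.2 ⟨hc, hcα⟩)
  by_cases habove : (T.filter (α ≤ ·)).Nonempty
  · set β₂ := (T.filter (α ≤ ·)).min' habove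
    obtain ⟨hβ₂T, hαβ₂⟩ := mem_filter.1 ((T.filter (α ≤ ·)).min'_mem habove)
    have hβ₂min : ∀ c ∈ T, α ≤ c → β₂ ≤ c := fun c hc hαc =>
      (T.filter (α ≤ ·)).min'_le c (mem_filter.2 ⟨hc, hαc⟩)
    have hgap : ∀ i, C i ≤ β₁ ∨ β₂ ≤ C i := fun i =>
      (le_total (C i) α).imp (hβ₁max _ (hCT i)) (hβ₂min _ (hCT i))
    have hα_eq := hingeValue_eq_of_no_kink_between A b C hβ₁α
      fun i => (hgap i).imp_right hαβ₂.trans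
    have hβ₂_eq := hingeValue_eq_of_no_kink_between A b C (hβ₁α.trans hαβ₂) hgap
    rcases le_total 0 (A - ∑ i with C i ≤ β₁, b i) with hslope | hslope
    · exact ⟨β₂, hβ₂T, by rw [hα_eq, hβ₂_eq]; nlinarith⟩
    · exact ⟨β₁, hβ₁T, by rw [hα_eq]; nlinarith⟩
  · have hall : ∀ i, C i ≤ β₁ := fun i =>
      hβ₁max _ (hCT i) (not_le.1 fun h => habove ⟨C i, mem_filter.2 ⟨hCT i, h⟩⟩).le
    have hα_eq := hingeValue_eq_of_no_kink_between A b C hβ₁α fun i => Or.inl (hall i)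
    rw [filter_true_of_mem fun i _ => hall i] at hα_eq
    exact ⟨β₁, hβ₁T, by rw [hα_eq]; nlinarith⟩

theorem sum_mul_le_of_le_add {b C γ : ι → ℝ} {α : ℝ} (hb : ∀ i, 0 ≤ b i)
    (hγ : ∀ i, 0 ≤ γ i) (hαγ : ∀ i, α ≤ γ i + C i) :
    ∑ i, b i * max (α - C i) 0 ≤ ∑ i, b i * γ i :=
  sum_le_sum fun i _ =>
    mul_le_mul_of_nonneg_left (max_le (by linarith [hαγ i]) (hγ i)) (hb i)

end Hinge

section Candidates

variable {ι : Type*} [Fintype ι]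

noncomputable def candidateAlphas (cl d : ι → ℝ) : Finset ℝ :=
  insert 0 (univ.image cl ∪ univ.image fun j => cl j + d j)

theorem mem_candidateAlphas {cl d : ι → ℝ} {β : ℝ} :
    β ∈ candidateAlphas cl d ↔ β = 0 ∨ (∃ j, β = cl j) ∨ ∃ j, β = cl j + d j := by
  simp [candidateAlphas, eq_comm]

noncomputable def budgetedBinaryVectors [DecidableEq ι] (Γ : ℕ) : Finset (ι → ℝ) :=
  (Fintype.piFinset fun _ => ({0, 1} : Finset ℝ)).filter fun δ => ∑ i, δ i ≤ Γ

theorem mem_budgetedBinaryVectors [DecidableEq ι] {Γ : ℕ} {δ : ι → ℝ} :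
    δ ∈ budgetedBinaryVectors Γ ↔ (∀ i, δ i = 0 ∨ δ i = 1) ∧ ∑ i, δ i ≤ Γ := by
  simp [budgetedBinaryVectors]

theorem kinks_subset_candidateAlphas {cl d δ : ι → ℝ} (hδ : ∀ i, δ i = 0 ∨ δ i = 1) :
    insert 0 (univ.image fun i => cl i + d i * δ i) ⊆ candidateAlphas cl d := by
  intro β hβ
  rw [mem_candidateAlphas]
  rcases mem_insert.1 hβ with h | h
  · exact Or.inl h
  · obtain ⟨j, -, rfl⟩ := mem_image.1 h
    rcases hδ j with h0 | h1
    · exact Or.inr (Or.inl ⟨j, by simp [h0]⟩)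
    · exact Or.inr (Or.inr ⟨j, by simp [h1]⟩)

end Candidates

theorem stmt12_general (n p : ℕ) (hpn : p ≤ n)
    (cl d : Fin n → ℝ) (hcl : ∀ i, 0 ≤ cl i) (hd : ∀ i, 0 ≤ d i) (Γ : ℕ)
    (x : Fin n → ℝ) (hx01 : ∀ i, x i = 0 ∨ x i = 1) :
    let Feas : ℝ → (Fin n → ℝ) → (Fin n → ℝ) → Prop := fun α γ δ =>
      0 ≤ α ∧ (∀ i, 0 ≤ γ i) ∧ (∀ i, δ i = 0 ∨ δ i = 1) ∧
      (∀ i, α ≤ γ i + cl i + d i * δ i) ∧ (∑ i, δ i) ≤ (Γ : ℝ)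
    let Obj : ℝ → (Fin n → ℝ) → ℝ := fun α γ =>
      ((p : ℝ) - ∑ i, x i) * α - ∑ i, (1 - x i) * γ i
    ∃ α : ℝ, ∃ γ δ : Fin n → ℝ, Feas α γ δ ∧
      (∀ α' : ℝ, ∀ γ' δ' : Fin n → ℝ, Feas α' γ' δ' → Obj α' γ' ≤ Obj α γ) ∧
      (α = 0 ∨ (∃ j, α = cl j) ∨ (∃ j, α = cl j + d j)) := by
  intro Feas Obj
  set A : ℝ := (p : ℝ) - ∑ i, x i
  set b : Fin n → ℝ := fun i => 1 - x i
  set C : (Fin n → ℝ) → Fin n → ℝ := fun δ i => cl i + d i * δ i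
  have hb : ∀ i, 0 ≤ b i := fun i => by rcases hx01 i with h | h <;> simp [b, h]
  have hAb : A ≤ ∑ i, b i := by
    have : (p : ℝ) ≤ n := by exact_mod_cast hpn
    have hsum : ∑ i, b i = n - ∑ i, x i := by simp [b, sum_sub_distrib]
    linarith
  obtain ⟨⟨α, δ⟩, hmem, hmax⟩ :=
    (candidateAlphas cl d ×ˢ budgetedBinaryVectors Γ).exists_max_image
      (fun q => hingeValue A b (C q.2) q.1)
      ⟨(0, 0), by simp [mem_candidateAlphas, mem_budgetedBinaryVectors]⟩
  obtain ⟨hα, hδ⟩ := mem_product.1 hmem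
  obtain ⟨hδ01, hδΓ⟩ := mem_budgetedBinaryVectors.1 hδ
  have hα0 : 0 ≤ α := by
    rcases mem_candidateAlphas.1 hα with rfl | ⟨j, rfl⟩ | ⟨j, rfl⟩
    exacts [le_rfl, hcl j, add_nonneg (hcl j) (hd j)]
  refine ⟨α, fun i => max (α - C δ i) 0, δ,
    ⟨hα0, fun i => le_max_right _ _, hδ01,
      fun i => by linarith [le_max_left (α - C δ i) 0], hδΓ⟩,
    ?_, mem_candidateAlphas.1 hα⟩
  rintro α' γ' δ' ⟨hα', hγ', hδ'01, hαγ', hδ'Γ⟩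
  obtain ⟨β, hβ, hle⟩ := exists_kink_hingeValue_ge (C := C δ') hAb hα'
  calc Obj α' γ' ≤ hingeValue A b (C δ') α' := sub_le_sub_left
        (sum_mul_le_of_le_add hb hγ' fun i => (hαγ' i).trans_eq (add_assoc _ _ _)) _
    _ ≤ hingeValue A b (C δ') β := hle
    _ ≤ hingeValue A b (C δ) α := hmax (β, δ') (mem_product.2
        ⟨kinks_subset_candidateAlphas hδ'01 hβ, mem_budgetedBinaryVectors.2 ⟨hδ'01, hδ'Γ⟩⟩)
    _ = Obj α _ := rfl

/-- Lemma 7: the adversarial two-stage problem under discrete budgeted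
uncertainty has an optimal solution with `α ∈ {0} ∪ {c̲_j} ∪ {c̲_j + d_j}`. -/
theorem stmt12 (n p : ℕ) (hp1 : 1 ≤ p) (hpn : p ≤ n)
    (cl d : Fin n → ℝ) (hcl : ∀ i, 0 ≤ cl i) (hd : ∀ i, 0 ≤ d i) (Γ : ℕ)
    (x : Fin n → ℝ) (hx01 : ∀ i, x i = 0 ∨ x i = 1) (hxp : (∑ i, x i) ≤ (p : ℝ)) :
    let Feas : ℝ → (Fin n → ℝ) → (Fin n → ℝ) → Prop := fun α γ δ =>
      0 ≤ α ∧ (∀ i, 0 ≤ γ i) ∧ (∀ i, δ i = 0 ∨ δ i = 1) ∧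
      (∀ i, α ≤ γ i + cl i + d i * δ i) ∧ (∑ i, δ i) ≤ (Γ : ℝ)
    let Obj : ℝ → (Fin n → ℝ) → ℝ := fun α γ =>
      ((p : ℝ) - ∑ i, x i) * α - ∑ i, (1 - x i) * γ i
    ∃ α : ℝ, ∃ γ δ : Fin n → ℝ, Feas α γ δ ∧
      (∀ α' : ℝ, ∀ γ' δ' : Fin n → ℝ, Feas α' γ' δ' → Obj α' γ' ≤ Obj α γ) ∧
      (α = 0 ∨ (∃ j, α = cl j) ∨ (∃ j, α = cl j + d j)) :=
  stmt12_general n p hpn cl d hcl hd Γ x hx01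
end

section
/- Let n, p be integers with 1 ≤ p ≤ n, let C, c̲, d ∈ ℝ^n_{≥0}, let Γ be a nonnegative integer, let α ∈ (0,1] satisfy c̲_i ≥ α·(c̲_i + d_i) for all i ∈ [n], and let U^d be the discrete budgeted uncertainty set. Let x̂ ∈ Φ₁ be a minimizer over x ∈ Φ₁ of C·x + min_{y ∈ Φ_x} c̲·y. Then C·x̂ + max_{c ∈ U^d} min_{y ∈ Φ_{x̂}} c·y ≤ (1/α) · min_{x ∈ Φ₁} ( C·x + max_{c ∈ U^d} min_{y ∈ Φ_x} c·y ); that is, x̂ is a (1/α)-approximate solution to the robust two-stage selection problem under U^d. -/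
open Finset

noncomputable section

/-- The set `Φ₁` of partial first-stage selections: 0-1 vectors with at most `p` ones. -/
def selPhi1 (n p : ℕ) : Set (Fin n → ℝ) :=
  {x | (∀ i, x i = 0 ∨ x i = 1) ∧ (∑ i, x i) ≤ (p : ℝ)}

/-- The completion set `Φ_x` of a first-stage solution `x ∈ Φ₁`. -/
def selPhiX (n p : ℕ) (x : Fin n → ℝ) : Set (Fin n → ℝ) :=
  {y | (∀ i, y i = 0 ∨ y i = 1) ∧ (∑ i, (x i + y i)) = (p : ℝ) ∧
    ∀ i, x i + y i ≤ 1}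

/-- The discrete budgeted uncertainty set `U^d`: the costs of at most `Γ`
items deviate to their upper bounds. -/
def Ud (n : ℕ) (cl d : Fin n → ℝ) (Γ : ℕ) : Set (Fin n → ℝ) :=
  {c | ∃ S : Finset (Fin n), S.card ≤ Γ ∧
    c = fun i => cl i + (if i ∈ S then d i else 0)}

/-- The optimal value `min_{y ∈ S} Σ c_i y_i` of the incremental problem. -/
def incVal (n : ℕ) (S : Set (Fin n → ℝ)) (c : Fin n → ℝ) : ℝ :=
  sInf {v | ∃ y ∈ S, v = ∑ i, c i * y i}



/-
The robust cost of a completion is squeezed between its nominal cost and `1/α` times it: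
every scenario `c ∈ U^d` satisfies `c̲ ≤ c` and `α • c ≤ c̲`, and the incremental value is
monotone and positively homogeneous in the cost vector. Hence
`C·x̂ + robust(x̂) ≤ (1/α)(C·x̂ + nominal(x̂)) ≤ (1/α)(C·x + nominal(x)) ≤ (1/α)(C·x + robust(x))`,
where the middle step is the optimality of `x̂` for the nominal problem and the first uses `α ≤ 1`.
-/

section incVal

variable {n : ℕ} {S : Set (Fin n → ℝ)} {c c' : Fin n → ℝ}

lemma incVal_eq_iInf (S : Set (Fin n → ℝ)) (c : Fin n → ℝ) :
    incVal n S c = ⨅ y : S, ∑ i, c i * (y : Fin n → ℝ) i := by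
  unfold incVal
  congr 1
  ext v
  simp [eq_comm]

lemma sum_mul_nonneg_of_nonneg (hc : 0 ≤ c) {y : Fin n → ℝ} (hy : 0 ≤ y) :
    0 ≤ ∑ i, c i * y i :=
  Finset.sum_nonneg fun i _ => mul_nonneg (hc i) (hy i)

lemma incVal_mono (hS : ∀ y ∈ S, 0 ≤ y) (hc : 0 ≤ c) (hcc' : c ≤ c') :
    incVal n S c ≤ incVal n S c' := by
  simp only [incVal_eq_iInf]
  refine ciInf_mono ⟨0, ?_⟩ fun y => ?_
  · rintro _ ⟨y, rfl⟩
    exact sum_mul_nonneg_of_nonneg hc (hS y y.2)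
  · exact Finset.sum_le_sum fun i _ => mul_le_mul_of_nonneg_right (hcc' i) (hS y y.2 i)

lemma incVal_smul {a : ℝ} (ha : 0 ≤ a) (S : Set (Fin n → ℝ)) (c : Fin n → ℝ) :
    incVal n S (a • c) = a * incVal n S c := by
  simp only [incVal_eq_iInf, Real.mul_iInf_of_nonneg ha, Finset.mul_sum, Pi.smul_apply,
    smul_eq_mul, mul_assoc]

end incVal

lemma nonneg_of_mem_selPhi1 {n p : ℕ} {x : Fin n → ℝ} (hx : x ∈ selPhi1 n p) : 0 ≤ x :=
  fun i => by rcases hx.1 i with h | h <;> simp [h]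

lemma nonneg_of_mem_selPhiX {n p : ℕ} {x y : Fin n → ℝ} (hy : y ∈ selPhiX n p x) : 0 ≤ y :=
  fun i => by rcases hy.1 i with h | h <;> simp [h]

section Ud

variable {n Γ : ℕ} {cl d c : Fin n → ℝ}

lemma nominal_mem_Ud : cl ∈ Ud n cl d Γ :=
  ⟨∅, by simp, by simp⟩

lemma nominal_le_of_mem_Ud (hd : 0 ≤ d) (hc : c ∈ Ud n cl d Γ) : cl ≤ c := by
  obtain ⟨S, -, rfl⟩ := hc
  intro i
  by_cases h : i ∈ S
  · simpa [h] using hd i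
  · simp [h]

lemma smul_le_nominal_of_mem_Ud {α : ℝ} (hα : 0 ≤ α) (hd : 0 ≤ d)
    (hαc : ∀ i, α * (cl i + d i) ≤ cl i) (hc : c ∈ Ud n cl d Γ) : α • c ≤ cl := by
  obtain ⟨S, -, rfl⟩ := hc
  intro i
  refine le_trans ?_ (hαc i)
  by_cases h : i ∈ S
  · simp [h]
  · simpa [h] using mul_le_mul_of_nonneg_left (le_add_of_nonneg_right (hd i)) hα

lemma sSup_incVal_Ud_mem_Icc {S : Set (Fin n → ℝ)} (hS : ∀ y ∈ S, 0 ≤ y) (hcl : 0 ≤ cl)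
    (hd : 0 ≤ d) {α : ℝ} (hα : 0 < α) (hαc : ∀ i, α * (cl i + d i) ≤ cl i) :
    sSup {v | ∃ c ∈ Ud n cl d Γ, v = incVal n S c} ∈
      Set.Icc (incVal n S cl) (α⁻¹ * incVal n S cl) := by
  have hupper : ∀ v ∈ {v | ∃ c ∈ Ud n cl d Γ, v = incVal n S c}, v ≤ α⁻¹ * incVal n S cl := by
    rintro _ ⟨c, hc, rfl⟩
    have hcnn : 0 ≤ α • c := smul_nonneg hα.le (hcl.trans (nominal_le_of_mem_Ud hd hc))
    have := incVal_mono hS hcnn (smul_le_nominal_of_mem_Ud hα.le hd hαc hc)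
    rw [incVal_smul hα.le] at this
    rwa [le_inv_mul_iff₀ hα]
  exact ⟨le_csSup ⟨_, hupper⟩ ⟨cl, nominal_mem_Ud, rfl⟩,
    csSup_le ⟨_, cl, nominal_mem_Ud, rfl⟩ hupper⟩

end Ud

theorem stmt13_general (n p : ℕ)
    (C cl d : Fin n → ℝ) (hC : ∀ i, 0 ≤ C i) (hcl : ∀ i, 0 ≤ cl i)
    (hd : ∀ i, 0 ≤ d i) (Γ : ℕ)
    (α : ℝ) (hα0 : 0 < α) (hα1 : α ≤ 1)
    (hαc : ∀ i, α * (cl i + d i) ≤ cl i)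
    (xh : Fin n → ℝ) (hxh : xh ∈ selPhi1 n p)
    (hmin : ∀ x ∈ selPhi1 n p,
      (∑ i, C i * xh i) + incVal n (selPhiX n p xh) cl ≤
        (∑ i, C i * x i) + incVal n (selPhiX n p x) cl) :
    (∑ i, C i * xh i) +
        sSup {v | ∃ c ∈ Ud n cl d Γ, v = incVal n (selPhiX n p xh) c} ≤
      (1 / α) * sInf {w | ∃ x ∈ selPhi1 n p,
        w = (∑ i, C i * x i) +
          sSup {v | ∃ c ∈ Ud n cl d Γ, v = incVal n (selPhiX n p x) c}} := by
  have hrob (x : Fin n → ℝ) := sSup_incVal_Ud_mem_Icc (S := selPhiX n p x) (Γ := Γ)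
    (fun _ => nonneg_of_mem_selPhiX) hcl hd hα0 hαc
  have hCxh : 0 ≤ ∑ i, C i * xh i := sum_mul_nonneg_of_nonneg hC (nonneg_of_mem_selPhi1 hxh)
  have hnominal_le_inf : (∑ i, C i * xh i) + incVal n (selPhiX n p xh) cl ≤
      sInf {w | ∃ x ∈ selPhi1 n p, w = (∑ i, C i * x i) +
        sSup {v | ∃ c ∈ Ud n cl d Γ, v = incVal n (selPhiX n p x) c}} := by
    refine le_csInf ⟨_, xh, hxh, rfl⟩ ?_
    rintro _ ⟨x, hx, rfl⟩
    linarith [hmin x hx, (hrob x).1]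
  have hα_inv : 1 ≤ α⁻¹ := one_le_inv₀ hα0 |>.mpr hα1
  calc (∑ i, C i * xh i) + sSup {v | ∃ c ∈ Ud n cl d Γ, v = incVal n (selPhiX n p xh) c}
      ≤ (∑ i, C i * xh i) + α⁻¹ * incVal n (selPhiX n p xh) cl := by gcongr; exact (hrob xh).2
    _ ≤ α⁻¹ * ((∑ i, C i * xh i) + incVal n (selPhiX n p xh) cl) := by
      rw [mul_add]; gcongr; exact le_mul_of_one_le_left hCxh hα_inv
    _ ≤ _ := by rw [one_div]; gcongr

/-- Proposition 9: the mid-point solution is a `1/α`-approximation for R2ST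
under discrete budgeted uncertainty. -/
theorem stmt13 (n p : ℕ) (hp1 : 1 ≤ p) (hpn : p ≤ n)
    (C cl d : Fin n → ℝ) (hC : ∀ i, 0 ≤ C i) (hcl : ∀ i, 0 ≤ cl i)
    (hd : ∀ i, 0 ≤ d i) (Γ : ℕ)
    (α : ℝ) (hα0 : 0 < α) (hα1 : α ≤ 1)
    (hαc : ∀ i, α * (cl i + d i) ≤ cl i)
    (xh : Fin n → ℝ) (hxh : xh ∈ selPhi1 n p)
    (hmin : ∀ x ∈ selPhi1 n p,
      (∑ i, C i * xh i) + incVal n (selPhiX n p xh) cl ≤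
        (∑ i, C i * x i) + incVal n (selPhiX n p x) cl) :
    (∑ i, C i * xh i) +
        sSup {v | ∃ c ∈ Ud n cl d Γ, v = incVal n (selPhiX n p xh) c} ≤
      (1 / α) * sInf {w | ∃ x ∈ selPhi1 n p,
        w = (∑ i, C i * x i) +
          sSup {v | ∃ c ∈ Ud n cl d Γ, v = incVal n (selPhiX n p x) c}} :=
  stmt13_general n p C cl d hC hcl hd Γ α hα0 hα1 hαc xh hxh hmin
end
end

section
/- Let n, p, k be integers with 1 ≤ p ≤ n and 0 ≤ k ≤ p, let c̲, d ∈ ℝ^n_{≥0}, and let Γ be a nonnegative integer with Γ ≤ k. Let x* ∈ Φ be a minimizer of Σ_i c̲_i·x_i over Φ. Then max_{c ∈ U^d} min_{y ∈ Φ^k_{x*}} c·y = max_{c ∈ U^d} min_{y ∈ Φ} c·y, and consequently for every x ∈ Φ, max_{c ∈ U^d} min_{y ∈ Φ^k_{x*}} c·y ≤ max_{c ∈ U^d} min_{y ∈ Φ^k_x} c·y; that is, x* is an optimal first-stage solution of the recoverable robust selection problem under U^d with zero first-stage costs. -/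
/-!
Write `X*` for the support of `x*` and `S` for the set of at most `Γ ≤ k` items whose costs the
adversary raises. Among the selections of `p` items that are optimal for the raised costs `c`,
take one, `Z`, with maximal overlap with `X*`. If `Z` missed more than `k` items of `X*`, one of
them, `j`, would lie outside `S`; swapping it in for some `i ∈ Z \ X*` keeps `Z` optimal, because
`c j = c̲ j ≤ c̲ i ≤ c i` by the nominal optimality of `X*`, and increases the overlap. So in every
scenario the recovery set of `x*` contains a selection that is optimal over all of `Φ`: the
recoverable value of `x*` is the unrestricted one, which is a lower bound for every other `x`.
-/

open Finset

noncomputable section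

/-- The set of feasible selections: 0-1 vectors with exactly `p` ones. -/
def selPhi (n p : ℕ) : Set (Fin n → ℝ) :=
  {x | (∀ i, x i = 0 ∨ x i = 1) ∧ (∑ i, x i) = (p : ℝ)}

/-- The recovery set `Φ^k_x`. -/
def selPhiK (n p k : ℕ) (x : Fin n → ℝ) : Set (Fin n → ℝ) :=
  {y | (∀ i, y i = 0 ∨ y i = 1) ∧ (∑ i, y i) = (p : ℝ) ∧
    (p : ℝ) - (k : ℝ) ≤ ∑ i, x i * y i}

/-- The continuous budgeted uncertainty set `U^c`. -/
def Uc (n : ℕ) (cl d : Fin n → ℝ) (Γ : ℝ) : Set (Fin n → ℝ) :=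
  {c | ∃ δ : Fin n → ℝ, (∀ i, 0 ≤ δ i ∧ δ i ≤ d i) ∧ (∑ i, δ i) ≤ Γ ∧
    c = fun i => cl i + δ i}

namespace RecoverableSelection

section Selections

variable {ι : Type*}

def IsMinSelection (c : ι → ℝ) (p : ℕ) (Z : Finset ι) : Prop :=
  #Z = p ∧ ∀ W : Finset ι, #W = p → ∑ i ∈ Z, c i ≤ ∑ i ∈ W, c i

lemma exists_isMinSelection [Fintype ι] (c : ι → ℝ) {p : ℕ} (hp : p ≤ Fintype.card ι) :
    ∃ Z, IsMinSelection c p Z := by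
  obtain ⟨X, -, hX⟩ := exists_subset_card_eq (s := (univ : Finset ι)) hp
  obtain ⟨Z, hZ, hmin⟩ := (powersetCard p (univ : Finset ι)).exists_min_image
    (fun Z => ∑ i ∈ Z, c i) ⟨X, mem_powersetCard.2 ⟨subset_univ X, hX⟩⟩
  exact ⟨Z, (mem_powersetCard.1 hZ).2,
    fun W hW => hmin W (mem_powersetCard.2 ⟨subset_univ W, hW⟩)⟩

variable [DecidableEq ι]

lemma card_insert_erase_of_mem_of_notMem {Z : Finset ι} {i j : ι} (hi : i ∈ Z) (hj : j ∉ Z) :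
    #(insert j (Z.erase i)) = #Z := by
  rw [card_insert_of_notMem (fun h => hj (mem_of_mem_erase h)), card_erase_add_one hi]

lemma sum_insert_erase_of_mem_of_notMem (f : ι → ℝ) {Z : Finset ι} {i j : ι} (hi : i ∈ Z)
    (hj : j ∉ Z) : ∑ x ∈ insert j (Z.erase i), f x = ∑ x ∈ Z, f x - f i + f j := by
  rw [sum_insert (fun h => hj (mem_of_mem_erase h)), sum_erase_eq_sub hi]
  ring

lemma card_inter_insert_erase {X Z : Finset ι} {i j : ι} (hjX : j ∈ X) (hjZ : j ∉ Z)
    (hiX : i ∉ X) : #(X ∩ insert j (Z.erase i)) = #(X ∩ Z) + 1 := by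
  rw [inter_insert_of_mem hjX, inter_erase, erase_eq_of_notMem (fun h => hiX (mem_inter.1 h).1),
    card_insert_of_notMem (fun h => hjZ (mem_inter.1 h).2)]

variable {c : ι → ℝ} {p : ℕ} {Z : Finset ι} {i j : ι}

lemma IsMinSelection.le_of_mem_of_notMem (hZ : IsMinSelection c p Z) (hj : j ∈ Z) (hi : i ∉ Z) :
    c j ≤ c i := by
  have := hZ.2 _ ((card_insert_erase_of_mem_of_notMem hj hi).trans hZ.1)
  rw [sum_insert_erase_of_mem_of_notMem c hj hi] at this
  linarith

lemma IsMinSelection.insert_erase (hZ : IsMinSelection c p Z) (hi : i ∈ Z) (hj : j ∉ Z)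
    (hji : c j ≤ c i) : IsMinSelection c p (insert j (Z.erase i)) := by
  refine ⟨(card_insert_erase_of_mem_of_notMem hi hj).trans hZ.1, fun W hW => ?_⟩
  rw [sum_insert_erase_of_mem_of_notMem c hi hj]
  linarith [hZ.2 W hW]

variable [Fintype ι]

theorem IsMinSelection.exists_isMinSelection_le_card_inter_add {cl : ι → ℝ} {X S : Finset ι}
    {k : ℕ} (hX : IsMinSelection cl p X) (hS : #S ≤ k) (hle : ∀ i, cl i ≤ c i)
    (heq : ∀ i ∉ S, c i = cl i) : ∃ Z, IsMinSelection c p Z ∧ p ≤ #(X ∩ Z) + k := by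
  classical
  obtain ⟨Z₀, hZ₀⟩ := exists_isMinSelection c (hX.1 ▸ card_le_univ X)
  obtain ⟨Z, hZmem, hZmax⟩ := (univ.filter (IsMinSelection c p)).exists_max_image
    (fun Z => #(X ∩ Z)) ⟨Z₀, mem_filter.2 ⟨mem_univ _, hZ₀⟩⟩
  have hZ := (mem_filter.1 hZmem).2
  refine ⟨Z, hZ, ?_⟩
  by_contra! hlt
  have hsplit := card_sdiff_add_card_inter X Z
  have hXp := hX.1
  have hZp := hZ.1
  obtain ⟨j, hjXZ, hjS⟩ := exists_mem_notMem_of_card_lt_card (s := S) (t := X \ Z) (by omega)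
  obtain ⟨i, hiZ, hiXZ⟩ := exists_mem_notMem_of_card_lt_card (s := X ∩ Z) (t := Z) (by omega)
  obtain ⟨hjX, hjZ⟩ := mem_sdiff.1 hjXZ
  have hiX : i ∉ X := fun h => hiXZ (mem_inter.2 ⟨h, hiZ⟩)
  have hji : c j ≤ c i := calc
    c j = cl j := heq j hjS
    _ ≤ cl i := hX.le_of_mem_of_notMem hjX hiX
    _ ≤ c i := hle i
  have := hZmax _ (mem_filter.2 ⟨mem_univ _, hZ.insert_erase hiZ hjZ hji⟩)
  rw [card_inter_insert_erase hjX hjZ hiX] at this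
  omega

end Selections

variable {n p k : ℕ}

def indicatorVec (Z : Finset (Fin n)) : Fin n → ℝ := fun i => if i ∈ Z then 1 else 0

lemma sum_mul_indicatorVec (c : Fin n → ℝ) (Z : Finset (Fin n)) :
    ∑ i, c i * indicatorVec Z i = ∑ i ∈ Z, c i := by
  simp [indicatorVec, mul_ite, sum_ite_mem]

lemma sum_indicatorVec (Z : Finset (Fin n)) : ∑ i, indicatorVec Z i = #Z := by
  simp [indicatorVec]

lemma sum_indicatorVec_mul_indicatorVec (X Z : Finset (Fin n)) :
    ∑ i, indicatorVec X i * indicatorVec Z i = #(X ∩ Z) := by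
  rw [sum_mul_indicatorVec]
  simp [indicatorVec, inter_comm]

lemma mem_selPhi_iff {x : Fin n → ℝ} :
    x ∈ selPhi n p ↔ ∃ Z : Finset (Fin n), #Z = p ∧ x = indicatorVec Z := by
  constructor
  · rintro ⟨h01, hsum⟩
    classical
    have hx : x = indicatorVec (univ.filter (x · = 1)) := by
      funext i
      rcases h01 i with h | h <;> simp [indicatorVec, h]
    refine ⟨_, ?_, hx⟩
    rw [hx, sum_indicatorVec] at hsum
    exact_mod_cast hsum
  · rintro ⟨Z, rfl, rfl⟩
    refine ⟨fun i => ?_, sum_indicatorVec Z⟩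
    unfold indicatorVec
    split <;> simp

lemma selPhiK_subset_selPhi (x : Fin n → ℝ) : selPhiK n p k x ⊆ selPhi n p :=
  fun _ hy => ⟨hy.1, hy.2.1⟩

lemma indicatorVec_mem_selPhiK {X Z : Finset (Fin n)} (hZ : #Z = p) (hXZ : p ≤ #(X ∩ Z) + k) :
    indicatorVec Z ∈ selPhiK n p k (indicatorVec X) := by
  obtain ⟨h01, hsum⟩ := mem_selPhi_iff.2 ⟨Z, hZ, rfl⟩
  refine ⟨h01, hsum, ?_⟩
  rw [sum_indicatorVec_mul_indicatorVec]
  have : (p : ℝ) ≤ #(X ∩ Z) + k := by exact_mod_cast hXZ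
  linarith

lemma mem_selPhiK_self {x : Fin n → ℝ} (hx : x ∈ selPhi n p) : x ∈ selPhiK n p k x := by
  obtain ⟨X, hX, rfl⟩ := mem_selPhi_iff.1 hx
  exact indicatorVec_mem_selPhiK hX (by rw [inter_self, hX]; omega)

lemma isMinSelection_iff {c : Fin n → ℝ} {Z : Finset (Fin n)} (hZ : #Z = p) :
    IsMinSelection c p Z ↔
      ∀ y ∈ selPhi n p, ∑ i, c i * indicatorVec Z i ≤ ∑ i, c i * y i := by
  simp only [IsMinSelection, hZ, true_and, mem_selPhi_iff]
  constructor
  · rintro h _ ⟨W, hW, rfl⟩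
    simpa only [sum_mul_indicatorVec] using h W hW
  · intro h W hW
    simpa only [sum_mul_indicatorVec] using h _ ⟨W, hW, rfl⟩

lemma selPhi_finite : (selPhi n p).Finite :=
  (Set.finite_range indicatorVec).subset fun _ hx =>
    let ⟨Z, _, h⟩ := mem_selPhi_iff.1 hx
    ⟨Z, h.symm⟩

lemma Ud_finite (cl d : Fin n → ℝ) (Γ : ℕ) : (Ud n cl d Γ).Finite :=
  (Set.finite_range fun S : Finset (Fin n) => fun i => cl i + if i ∈ S then d i else 0).subset
    (by rintro _ ⟨S, -, rfl⟩; exact ⟨S, rfl⟩)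

lemma setOf_exists_eq_image {α β : Type*} (f : α → β) (s : Set α) :
    {b | ∃ a ∈ s, b = f a} = f '' s := by
  ext
  simp [eq_comm]

lemma incVal_eq_of_forall_le {S : Set (Fin n → ℝ)} {c y : Fin n → ℝ} (hy : y ∈ S)
    (h : ∀ y' ∈ S, ∑ i, c i * y i ≤ ∑ i, c i * y' i) : incVal n S c = ∑ i, c i * y i :=
  IsLeast.csInf_eq ⟨⟨y, hy, rfl⟩, by rintro _ ⟨y', hy', rfl⟩; exact h y' hy'⟩

lemma incVal_le_incVal {S T : Set (Fin n → ℝ)} (c : Fin n → ℝ) (hST : S ⊆ T) (hT : T.Finite)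
    (hS : S.Nonempty) : incVal n T c ≤ incVal n S c := by
  unfold incVal
  simp only [setOf_exists_eq_image]
  exact csInf_le_csInf (hT.image _).bddBelow (hS.image _) (Set.image_mono hST)

theorem incVal_selPhiK_eq_incVal_selPhi {cl d xstar c : Fin n → ℝ} {Γ : ℕ}
    (hd : ∀ i, 0 ≤ d i) (hΓ : Γ ≤ k) (hxs : xstar ∈ selPhi n p)
    (hmin : ∀ x ∈ selPhi n p, ∑ i, cl i * xstar i ≤ ∑ i, cl i * x i) (hc : c ∈ Ud n cl d Γ) :
    incVal n (selPhiK n p k xstar) c = incVal n (selPhi n p) c := by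
  obtain ⟨X, hXp, rfl⟩ := mem_selPhi_iff.1 hxs
  obtain ⟨S, hS, rfl⟩ := hc
  obtain ⟨Z, hZ, hXZ⟩ := ((isMinSelection_iff hXp).2 hmin).exists_isMinSelection_le_card_inter_add
    (c := fun i => cl i + if i ∈ S then d i else 0) (hS.trans hΓ)
    (fun i => by split_ifs <;> linarith [hd i]) (fun i hi => by simp [hi])
  have hZmin := (isMinSelection_iff hZ.1).1 hZ
  rw [incVal_eq_of_forall_le (indicatorVec_mem_selPhiK hZ.1 hXZ)
      (fun y hy => hZmin y (selPhiK_subset_selPhi _ hy)),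
    incVal_eq_of_forall_le (mem_selPhi_iff.2 ⟨Z, hZ.1, rfl⟩) hZmin]

lemma csSup_setOf_le_csSup_setOf {α : Type*} {U : Set α} (hU : U.Finite) (hne : U.Nonempty)
    {f g : α → ℝ} (h : ∀ c ∈ U, f c ≤ g c) :
    sSup {v | ∃ c ∈ U, v = f c} ≤ sSup {v | ∃ c ∈ U, v = g c} := by
  simp only [setOf_exists_eq_image]
  exact csSup_le (hne.image f) fun _ ⟨c, hc, hv⟩ =>
    hv ▸ (h c hc).trans (le_csSup (hU.image g).bddAbove ⟨c, hc, rfl⟩)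

end RecoverableSelection

open RecoverableSelection in
theorem stmt14_general (n p k : ℕ)
    (cl d : Fin n → ℝ) (hd : ∀ i, 0 ≤ d i)
    (Γ : ℕ) (hΓ : Γ ≤ k)
    (xstar : Fin n → ℝ) (hxs : xstar ∈ selPhi n p)
    (hmin : ∀ x ∈ selPhi n p, (∑ i, cl i * xstar i) ≤ ∑ i, cl i * x i) :
    sSup {v | ∃ c ∈ Ud n cl d Γ, v = incVal n (selPhiK n p k xstar) c} =
        sSup {v | ∃ c ∈ Ud n cl d Γ, v = incVal n (selPhi n p) c} ∧
      ∀ x ∈ selPhi n p,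
        sSup {v | ∃ c ∈ Ud n cl d Γ, v = incVal n (selPhiK n p k xstar) c} ≤
          sSup {v | ∃ c ∈ Ud n cl d Γ, v = incVal n (selPhiK n p k x) c} := by
  have hvalues : {v | ∃ c ∈ Ud n cl d Γ, v = incVal n (selPhiK n p k xstar) c} =
      {v | ∃ c ∈ Ud n cl d Γ, v = incVal n (selPhi n p) c} :=
    Set.ext fun v => exists_congr fun c => and_congr_right fun hc => by
      rw [incVal_selPhiK_eq_incVal_selPhi hd hΓ hxs hmin hc]
  refine ⟨congrArg sSup hvalues, fun x hx => ?_⟩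
  rw [hvalues]
  exact csSup_setOf_le_csSup_setOf (Ud_finite cl d Γ) ⟨_, ∅, by simp, rfl⟩ fun c _ =>
    incVal_le_incVal c (selPhiK_subset_selPhi x) selPhi_finite ⟨x, mem_selPhiK_self hx⟩

/-- When `Γ ≤ k`, the nominally optimal selection is an optimal first-stage
solution of RREC under `U^d` with zero first-stage costs. -/
theorem stmt14 (n p k : ℕ) (hp1 : 1 ≤ p) (hpn : p ≤ n) (hk : k ≤ p)
    (cl d : Fin n → ℝ) (hcl : ∀ i, 0 ≤ cl i) (hd : ∀ i, 0 ≤ d i)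
    (Γ : ℕ) (hΓ : Γ ≤ k)
    (xstar : Fin n → ℝ) (hxs : xstar ∈ selPhi n p)
    (hmin : ∀ x ∈ selPhi n p, (∑ i, cl i * xstar i) ≤ ∑ i, cl i * x i) :
    sSup {v | ∃ c ∈ Ud n cl d Γ, v = incVal n (selPhiK n p k xstar) c} =
        sSup {v | ∃ c ∈ Ud n cl d Γ, v = incVal n (selPhi n p) c} ∧
      ∀ x ∈ selPhi n p,
        sSup {v | ∃ c ∈ Ud n cl d Γ, v = incVal n (selPhiK n p k xstar) c} ≤
          sSup {v | ∃ c ∈ Ud n cl d Γ, v = incVal n (selPhiK n p k x) c} :=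
  stmt14_general n p k cl d hd Γ hΓ xstar hxs hmin
end
end

section
/- Let n, p, k be integers with 0 ≤ k ≤ p ≤ n and n ≥ p + k, let x ∈ Φ, and let c ∈ ℝ^n_{≥0}. Then min_{y ∈ Φ^k_x} Σ_{i=1}^n c_i·y_i = min_{j ∈ {p−k, p−k+1, …, p}} ( (sum of the j smallest values among {c_i : i ∈ X_x}) + (sum of the p−j smallest values among {c_i : i ∉ X_x}) ), where an empty sum of the 0 smallest values equals 0. -/
/-!
A 0-1 vector `y` is the indicator of its support `Y`; it lies in `Φ^k_x` iff `|Y| = p` and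
`|Y ∩ X_x| ≥ p - k`. Splitting `Y` into `Y ∩ X_x` (of size `j`) and `Y \ X_x` (of size `p - j`),
the cost for a fixed `j` is at least the sum of the `j` cheapest costs in `X_x` plus the `p - j`
cheapest outside, and this bound is attained by the union of two such cheapest subsets, which
exist because `|X_x| = p` and `n - p ≥ k ≥ p - j`.
-/

open Finset

noncomputable section

/-- The sum of the `l` smallest entries of `c` over indices in `s`, expressed
as the minimum of `Σ_{i ∈ T} c i` over subsets `T ⊆ s` of cardinality `l`. -/
def sumSmallest (n : ℕ) (s : Finset (Fin n)) (c : Fin n → ℝ) (l : ℕ) : ℝ :=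
  sInf {w | ∃ T ⊆ s, T.card = l ∧ w = ∑ i ∈ T, c i}

section ZeroOne

variable {ι : Type*} [Fintype ι]

lemma sum_mul_eq_sum_filter_eq_one {y : ι → ℝ} (hy : ∀ i, y i = 0 ∨ y i = 1) (c : ι → ℝ) :
    ∑ i, c i * y i = ∑ i ∈ univ.filter (y · = 1), c i := by
  rw [sum_filter]
  refine sum_congr rfl fun i _ => ?_
  rcases hy i with h | h <;> simp [h]

lemma sum_eq_card_filter_eq_one {y : ι → ℝ} (hy : ∀ i, y i = 0 ∨ y i = 1) :
    ∑ i, y i = #(univ.filter (y · = 1)) := by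
  simpa using sum_mul_eq_sum_filter_eq_one hy 1

lemma sum_mul_eq_card_filter_inter [DecidableEq ι] {x y : ι → ℝ}
    (hx : ∀ i, x i = 0 ∨ x i = 1) (hy : ∀ i, y i = 0 ∨ y i = 1) :
    ∑ i, x i * y i = #(univ.filter (y · = 1) ∩ univ.filter (x · = 1)) := by
  rw [← filter_and, natCast_card_filter]
  refine sum_congr rfl fun i _ => ?_
  rcases hx i with h | h <;> rcases hy i with h' | h' <;> simp [h, h']

lemma exists_zero_one_filter_eq_one [DecidableEq ι] (Y : Finset ι) :
    ∃ y : ι → ℝ, (∀ i, y i = 0 ∨ y i = 1) ∧ univ.filter (y · = 1) = Y := by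
  refine ⟨fun i => if i ∈ Y then 1 else 0, fun i => ?_, ?_⟩
  · by_cases h : i ∈ Y <;> simp [h]
  · ext i
    by_cases h : i ∈ Y <;> simp [h]

end ZeroOne

section SumSmallest

variable {n : ℕ} (s : Finset (Fin n)) (c : Fin n → ℝ)

lemma sumSmallest_eq_sInf_image (l : ℕ) :
    sumSmallest n s c l = sInf ↑((s.powersetCard l).image fun T => ∑ i ∈ T, c i) := by
  simp only [sumSmallest, coe_image]
  congr 1
  ext w
  simp [and_assoc, eq_comm]

lemma sumSmallest_le {T : Finset (Fin n)} {l : ℕ} (hT : T ⊆ s) (hl : #T = l) :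
    sumSmallest n s c l ≤ ∑ i ∈ T, c i := by
  rw [sumSmallest_eq_sInf_image]
  exact csInf_le (Finset.bddBelow _) (mem_image_of_mem _ (mem_powersetCard.2 ⟨hT, hl⟩))

lemma exists_sumSmallest_eq {l : ℕ} (hl : l ≤ #s) :
    ∃ T ⊆ s, #T = l ∧ sumSmallest n s c l = ∑ i ∈ T, c i := by
  obtain ⟨T, hT, hTl⟩ := exists_subset_card_eq hl
  have hne : ((s.powersetCard l).image fun T => ∑ i ∈ T, c i).Nonempty :=
    ⟨_, mem_image_of_mem _ (mem_powersetCard.2 ⟨hT, hTl⟩)⟩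
  obtain ⟨T', hT', h⟩ := mem_image.1 hne.csInf_mem
  rw [mem_powersetCard] at hT'
  exact ⟨T', hT'.1, hT'.2, by rw [sumSmallest_eq_sInf_image, h]⟩

end SumSmallest

section Recovery

variable {n p k : ℕ}

lemma setOf_cost_selPhiK_eq {x : Fin n → ℝ} (hx : ∀ i, x i = 0 ∨ x i = 1) (c : Fin n → ℝ) :
    {v | ∃ y ∈ selPhiK n p k x, v = ∑ i, c i * y i} =
      (fun Y => ∑ i ∈ Y, c i) '' {Y | #Y = p ∧ p ≤ #(Y ∩ univ.filter (x · = 1)) + k} := by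
  ext v
  constructor
  · rintro ⟨y, ⟨hy, hsum, hrec⟩, rfl⟩
    rw [sum_eq_card_filter_eq_one hy] at hsum
    rw [sum_mul_eq_card_filter_inter hx hy] at hrec
    refine ⟨univ.filter (y · = 1), ⟨by exact_mod_cast hsum, ?_⟩,
      (sum_mul_eq_sum_filter_eq_one hy c).symm⟩
    have : (p : ℝ) ≤ #(univ.filter (y · = 1) ∩ univ.filter (x · = 1)) + k := by linarith
    exact_mod_cast this
  · rintro ⟨Y, ⟨hcard, hrec⟩, rfl⟩
    obtain ⟨y, hy, hyY⟩ := exists_zero_one_filter_eq_one Y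
    refine ⟨y, ⟨hy, ?_, ?_⟩, ?_⟩
    · rw [sum_eq_card_filter_eq_one hy, hyY, hcard]
    · rw [sum_mul_eq_card_filter_inter hx hy, hyY]
      have : (p : ℝ) ≤ #(Y ∩ univ.filter (x · = 1)) + k := by exact_mod_cast hrec
      linarith
    · rw [sum_mul_eq_sum_filter_eq_one hy, hyY]

variable (X : Finset (Fin n)) (c : Fin n → ℝ)

lemma sumSmallest_add_sumSmallest_le_sum (Y : Finset (Fin n)) :
    sumSmallest n X c #(Y ∩ X) + sumSmallest n Xᶜ c (#Y - #(Y ∩ X)) ≤ ∑ i ∈ Y, c i := by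
  rw [← sum_inter_add_sum_sdiff Y X c]
  have hcard := card_sdiff_add_card_inter Y X
  gcongr
  · exact sumSmallest_le X c inter_subset_right rfl
  · exact sumSmallest_le Xᶜ c (fun i hi => mem_compl.2 (mem_sdiff.1 hi).2) (by omega)

lemma exists_sum_eq_sumSmallest_add_sumSmallest {j l : ℕ} (hj : j ≤ #X) (hl : l ≤ #Xᶜ) :
    ∃ Y : Finset (Fin n), #(Y ∩ X) = j ∧ #Y = j + l ∧
      ∑ i ∈ Y, c i = sumSmallest n X c j + sumSmallest n Xᶜ c l := by
  obtain ⟨T, hTX, hT, hTc⟩ := exists_sumSmallest_eq X c hj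
  obtain ⟨S, hSX, hS, hSc⟩ := exists_sumSmallest_eq Xᶜ c hl
  have hdisj : Disjoint T S := disjoint_compl_right.mono hTX hSX
  refine ⟨T ∪ S, ?_, by rw [card_union_of_disjoint hdisj, hT, hS],
    by rw [sum_union hdisj, hTc, hSc]⟩
  rw [union_inter_distrib_right, inter_eq_left.2 hTX,
    disjoint_iff_inter_eq_empty.1 (subset_compl_iff_disjoint_right.1 hSX), union_empty, hT]

theorem sInf_image_sum_eq_sInf_sumSmallest_add (hX : p ≤ #X) (hXc : k ≤ #Xᶜ) :
    sInf ((fun Y => ∑ i ∈ Y, c i) '' {Y | #Y = p ∧ p ≤ #(Y ∩ X) + k}) =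
      sInf {w | ∃ j : ℕ, p - k ≤ j ∧ j ≤ p ∧
        w = sumSmallest n X c j + sumSmallest n Xᶜ c (p - j)} := by
  have hA : BddBelow ((fun Y => ∑ i ∈ Y, c i) '' {Y | #Y = p ∧ p ≤ #(Y ∩ X) + k}) :=
    (Set.toFinite _).bddBelow
  have hB : BddBelow {w | ∃ j : ℕ, p - k ≤ j ∧ j ≤ p ∧
      w = sumSmallest n X c j + sumSmallest n Xᶜ c (p - j)} :=
    ((Set.finite_Iic p).image fun j =>
      sumSmallest n X c j + sumSmallest n Xᶜ c (p - j)).bddBelow.mono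
        (by rintro _ ⟨j, -, hj, rfl⟩; exact ⟨j, hj, rfl⟩)
  apply le_antisymm
  · refine le_csInf ⟨_, p, Nat.sub_le p k, le_rfl, rfl⟩ ?_
    rintro _ ⟨j, hkj, hjp, rfl⟩
    obtain ⟨Y, hYX, hY, hYc⟩ :=
      exists_sum_eq_sumSmallest_add_sumSmallest X c (l := p - j) (hjp.trans hX) (by omega)
    exact csInf_le hA ⟨Y, ⟨by omega, by omega⟩, hYc⟩
  · obtain ⟨Y, hYX, hY⟩ := exists_subset_card_eq hX
    refine le_csInf ⟨_, Y, ⟨hY, by rw [inter_eq_left.2 hYX]; omega⟩, rfl⟩ ?_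
    rintro _ ⟨Y, ⟨hY, hrec⟩, rfl⟩
    refine (csInf_le hB ⟨#(Y ∩ X), by omega, hY ▸ card_le_card inter_subset_left, rfl⟩).trans ?_
    exact hY ▸ sumSmallest_add_sumSmallest_le_sum X c Y

end Recovery

theorem stmt17_general (n p k : ℕ) (hnpk : p + k ≤ n)
    (x : Fin n → ℝ) (hx : x ∈ selPhi n p)
    (c : Fin n → ℝ) :
    let Xx : Finset (Fin n) := Finset.univ.filter (fun i => x i = 1)
    incVal n (selPhiK n p k x) c =
      sInf {w | ∃ j : ℕ, p - k ≤ j ∧ j ≤ p ∧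
        w = sumSmallest n Xx c j + sumSmallest n Xxᶜ c (p - j)} := by
  intro Xx
  obtain ⟨hx01, hxsum⟩ := hx
  have hXx : #Xx = p := by
    exact_mod_cast (sum_eq_card_filter_eq_one hx01).symm.trans hxsum
  have hXxc : k ≤ #Xxᶜ := by
    rw [card_compl, hXx, Fintype.card_fin]
    omega
  rw [incVal, setOf_cost_selPhiK_eq hx01]
  exact sInf_image_sum_eq_sInf_sumSmallest_add Xx c hXx.ge hXxc

/-- The incremental value equals the minimum over `j ∈ {p−k,…,p}` of the sum of
the `j` smallest costs in `X_x` plus the `p−j` smallest costs outside `X_x`. -/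
theorem stmt17 (n p k : ℕ) (hk : k ≤ p) (hpn : p ≤ n) (hnpk : p + k ≤ n)
    (x : Fin n → ℝ) (hx : x ∈ selPhi n p)
    (c : Fin n → ℝ) (hc : ∀ i, 0 ≤ c i) :
    let Xx : Finset (Fin n) := Finset.univ.filter (fun i => x i = 1)
    incVal n (selPhiK n p k x) c =
      sInf {w | ∃ j : ℕ, p - k ≤ j ∧ j ≤ p ∧
        w = sumSmallest n Xx c j + sumSmallest n Xxᶜ c (p - j)} :=
  stmt17_general n p k hnpk x hx c
end
end

section
/- Let n, p, k be integers with 1 ≤ p ≤ n and 0 ≤ k ≤ p, let x ∈ Φ, let c̲, d ∈ ℝ^n_{≥0} and Γ ≥ 0. For real levels L_x, L_x̄, define the (L_x, L_x̄)-compatible scenario c(L_x, L_x̄) ∈ ℝ^n by c(L_x, L_x̄)_i = max{ c̲_i, min{ c̲_i + d_i, L_x } } for i ∈ X_x, and c(L_x, L_x̄)_i = max{ c̲_i, min{ c̲_i + d_i, L_x̄ } } for i ∉ X_x. Then for every c ∈ U^c there exist L_x, L_x̄ ∈ ℝ such that c(L_x, L_x̄) ∈ U^c and min_{y ∈ Φ^k_x}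 Σ_i c(L_x, L_x̄)_i·y_i ≥ min_{y ∈ Φ^k_x} Σ_i c_i·y_i. -/
open Finset

noncomputable section

/-!
On `X_x` and on its complement separately, choose the level `L` (intermediate value theorem) so that
the clamped scenario `max (cl i) (min (cl i + d i) L)` has the same total there as `c`; the new
scenario then spends the same budget as `c`. On each part it lies above `c` below the level and
below `c` above it, so, comparing `∑ (θ - ·)⁺` at the `t`-th smallest value `θ` of `c`,
the `t` cheapest coordinates of the part under `c` cost at most any `t` of its coordinates under
the new scenario. Replacing both parts of a recovery solution by the cheapest ones of the same
sizes keeps it in `Φ^k_x` and does not increase its cost.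
-/

section Levels

variable {ι : Type*}

def levelScenario (cl d : ι → ℝ) (L : ℝ) (i : ι) : ℝ :=
  max (cl i) (min (cl i + d i) L)

variable {cl d : ι → ℝ} {L : ℝ} {i : ι}

lemma le_levelScenario : cl i ≤ levelScenario cl d L i :=
  le_max_left _ _

lemma levelScenario_le (hd : 0 ≤ d i) : levelScenario cl d L i ≤ cl i + d i :=
  max_le (by linarith) (min_le_left _ _)

lemma levelScenario_of_le (h : L ≤ cl i) : levelScenario cl d L i = cl i :=
  max_eq_left ((min_le_right _ _).trans h)

lemma levelScenario_of_ge (hd : 0 ≤ d i) (h : cl i + d i ≤ L) :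
    levelScenario cl d L i = cl i + d i := by
  rw [levelScenario, min_eq_left h, max_eq_right (by linarith)]

lemma le_levelScenario_of_lt {c : ℝ} (h : levelScenario cl d L i < L) (hc : c ≤ cl i + d i) :
    c ≤ levelScenario cl d L i := by
  unfold levelScenario at *
  grind

lemma levelScenario_le_of_gt {c : ℝ} (h : L < levelScenario cl d L i) (hc : cl i ≤ c) :
    levelScenario cl d L i ≤ c := by
  unfold levelScenario at *
  grind

lemma continuous_levelScenario (cl d : ι → ℝ) (i : ι) :
    Continuous fun L => levelScenario cl d L i :=
  continuous_const.max (continuous_const.min continuous_id)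

lemma exists_sum_levelScenario_eq (S : Finset ι) (hd : ∀ i ∈ S, 0 ≤ d i) {s : ℝ}
    (hlo : ∑ i ∈ S, cl i ≤ s) (hhi : s ≤ ∑ i ∈ S, (cl i + d i)) :
    ∃ L, ∑ i ∈ S, levelScenario cl d L i = s := by
  have hbot : ∑ i ∈ S, levelScenario cl d (-∑ j ∈ S, |cl j|) i = ∑ i ∈ S, cl i :=
    sum_congr rfl fun i hi => levelScenario_of_le <|
      (neg_le_neg (single_le_sum (fun j _ => abs_nonneg (cl j)) hi)).trans (neg_abs_le _)
  have htop :
      ∑ i ∈ S, levelScenario cl d (∑ j ∈ S, |cl j + d j|) i = ∑ i ∈ S, (cl i + d i) :=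
    sum_congr rfl fun i hi => levelScenario_of_ge (hd i hi) <|
      (le_abs_self _).trans (single_le_sum (fun j _ => abs_nonneg (cl j + d j)) hi)
  exact intermediate_value_univ _ _
    (continuous_finsetSum S fun i _ => continuous_levelScenario cl d i)
    ⟨hbot ▸ hlo, htop ▸ hhi⟩

end Levels

section Exchange

variable {ι : Type*}

lemma card_mul_sub_sum_max_le_sum {S A : Finset ι} (hA : A ⊆ S) (f : ι → ℝ) (θ : ℝ) :
    #A * θ - ∑ i ∈ S, max 0 (θ - f i) ≤ ∑ i ∈ A, f i := by
  have hAS : ∑ i ∈ A, max 0 (θ - f i) ≤ ∑ i ∈ S, max 0 (θ - f i) :=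
    sum_le_sum_of_subset_of_nonneg hA fun i _ _ => le_max_left _ _
  have hA : ∑ i ∈ A, (θ - f i) ≤ ∑ i ∈ A, max 0 (θ - f i) :=
    sum_le_sum fun i _ => le_max_right _ _
  rw [sum_sub_distrib, sum_const, nsmul_eq_mul] at hA
  linarith

lemma sum_max_sub_le_of_crossing {S : Finset ι} {c c' : ι → ℝ} {L : ℝ}
    (hlt : ∀ i ∈ S, c' i < L → c i ≤ c' i) (hgt : ∀ i ∈ S, L < c' i → c' i ≤ c i)
    (hsum : ∑ i ∈ S, c i ≤ ∑ i ∈ S, c' i) (θ : ℝ) :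
    ∑ i ∈ S, max 0 (θ - c' i) ≤ ∑ i ∈ S, max 0 (θ - c i) := by
  rcases le_total θ L with hθ | hθ
  · refine sum_le_sum fun i hi => max_le (le_max_left _ _) ?_
    rcases lt_or_ge (c' i) θ with h | h
    · linarith [hlt i hi (by linarith), le_max_right 0 (θ - c i)]
    · linarith [le_max_left 0 (θ - c i)]
  · -- `(θ - v)⁺ = (v - θ)⁺ + (θ - v)`: compare the parts above `θ`, and use the totals
    have hflip : ∀ v : ℝ, max 0 (θ - v) = max 0 (v - θ) + (θ - v) := fun v => by
      rcases le_total v θ with h | h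
      · rw [max_eq_right (by linarith), max_eq_left (by linarith)]; ring
      · rw [max_eq_left (by linarith), max_eq_right (by linarith)]; ring
    have habove : ∑ i ∈ S, max 0 (c' i - θ) ≤ ∑ i ∈ S, max 0 (c i - θ) := by
      refine sum_le_sum fun i hi => max_le (le_max_left _ _) ?_
      rcases lt_or_ge θ (c' i) with h | h
      · linarith [hgt i hi (by linarith), le_max_right 0 (c i - θ)]
      · linarith [le_max_left 0 (c i - θ)]
    simp only [hflip, sum_add_distrib, sum_sub_distrib]
    linarith

variable [DecidableEq ι]

lemma exists_subset_card_eq_forall_le (S : Finset ι) (f : ι → ℝ) {t : ℕ} (ht : t ≤ #S) :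
    ∃ B ⊆ S, #B = t ∧ ∀ i ∈ B, ∀ j ∈ S \ B, f i ≤ f j := by
  obtain ⟨B, hB, hmin⟩ := exists_min_image (S.powersetCard t) (fun B => ∑ i ∈ B, f i)
    (powersetCard_nonempty.2 ht)
  obtain ⟨hBS, hBt⟩ := mem_powersetCard.1 hB
  refine ⟨B, hBS, hBt, fun i hi j hj => not_lt.1 fun hji => ?_⟩
  obtain ⟨hjS, hjB⟩ := mem_sdiff.1 hj
  have hj' : j ∉ B.erase i := fun h => hjB (mem_of_mem_erase h)
  have hswap : insert j (B.erase i) ∈ S.powersetCard t := by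
    refine mem_powersetCard.2 ⟨insert_subset hjS ((erase_subset i B).trans hBS), ?_⟩
    rw [card_insert_of_notMem hj', card_erase_of_mem hi, ← hBt,
      Nat.sub_add_cancel (card_pos.2 ⟨i, hi⟩)]
  have := hmin _ hswap
  rw [sum_insert hj', sum_erase_eq_sub hi] at this
  linarith

lemma sum_eq_card_mul_sub_sum_max {S B : Finset ι} (hB : B ⊆ S) {f : ι → ℝ} {θ : ℝ}
    (hθB : ∀ i ∈ B, f i ≤ θ) (hθS : ∀ j ∈ S \ B, θ ≤ f j) :
    ∑ i ∈ B, f i = #B * θ - ∑ i ∈ S, max 0 (θ - f i) := by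
  rw [← sum_sdiff hB, sum_eq_zero fun j hj => max_eq_left (sub_nonpos.2 (hθS j hj)),
    sum_congr rfl fun i hi => max_eq_right (sub_nonneg.2 (hθB i hi)),
    zero_add, sum_sub_distrib, sum_const, nsmul_eq_mul]
  ring

lemma exists_subset_card_eq_sum_le {S A : Finset ι} (hA : A ⊆ S) {c c' : ι → ℝ} {L : ℝ}
    (hlt : ∀ i ∈ S, c' i < L → c i ≤ c' i) (hgt : ∀ i ∈ S, L < c' i → c' i ≤ c i)
    (hsum : ∑ i ∈ S, c i ≤ ∑ i ∈ S, c' i) :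
    ∃ B ⊆ S, #B = #A ∧ ∑ i ∈ B, c i ≤ ∑ i ∈ A, c' i := by
  obtain ⟨B, hBS, hBA, hcheap⟩ := exists_subset_card_eq_forall_le S c (card_le_card hA)
  refine ⟨B, hBS, hBA, ?_⟩
  rcases B.eq_empty_or_nonempty with rfl | hB
  · rw [card_empty, eq_comm, card_eq_zero] at hBA
    simp [hBA]
  obtain ⟨i₀, hi₀, hmax⟩ := exists_max_image B c hB
  calc ∑ i ∈ B, c i = #A * c i₀ - ∑ i ∈ S, max 0 (c i₀ - c i) := by
        rw [sum_eq_card_mul_sub_sum_max hBS hmax (hcheap i₀ hi₀), hBA]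
    _ ≤ #A * c i₀ - ∑ i ∈ S, max 0 (c i₀ - c' i) := by
        linarith [sum_max_sub_le_of_crossing hlt hgt hsum (c i₀)]
    _ ≤ ∑ i ∈ A, c' i := card_mul_sub_sum_max_le_sum hA c' _

end Exchange

section Compatible

variable {ι : Type*} (P : ι → Prop) [DecidablePred P]

-- the paper's `c(L_x, L_x̄)`, with `P i` standing for `i ∈ X_x`
def compatScenario (cl d : ι → ℝ) (Lx Lxb : ℝ) (i : ι) : ℝ :=
  if P i then levelScenario cl d Lx i else levelScenario cl d Lxb i

variable {P} {cl d c : ι → ℝ} {Lx Lxb : ℝ}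

lemma le_compatScenario (i : ι) : cl i ≤ compatScenario P cl d Lx Lxb i := by
  unfold compatScenario
  split_ifs <;> exact le_levelScenario

lemma compatScenario_le {i : ι} (hd : 0 ≤ d i) :
    compatScenario P cl d Lx Lxb i ≤ cl i + d i := by
  unfold compatScenario
  split_ifs <;> exact levelScenario_le hd

lemma sum_compatScenario [Fintype ι]
    (hLx : ∑ i with P i, levelScenario cl d Lx i = ∑ i with P i, c i)
    (hLxb : ∑ i with ¬P i, levelScenario cl d Lxb i = ∑ i with ¬P i, c i) :
    ∑ i, compatScenario P cl d Lx Lxb i = ∑ i, c i := by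
  unfold compatScenario
  rw [sum_ite, hLx, hLxb, sum_filter_add_sum_filter_not]

lemma exists_card_eq_sum_le_compatScenario [Fintype ι] [DecidableEq ι]
    (hlo : ∀ i, cl i ≤ c i) (hhi : ∀ i, c i ≤ cl i + d i)
    (hLx : ∑ i with P i, levelScenario cl d Lx i = ∑ i with P i, c i)
    (hLxb : ∑ i with ¬P i, levelScenario cl d Lxb i = ∑ i with ¬P i, c i) (Y : Finset ι) :
    ∃ B : Finset ι, #B = #Y ∧ #{i ∈ B | P i} = #{i ∈ Y | P i} ∧
      ∑ i ∈ B, c i ≤ ∑ i ∈ Y, compatScenario P cl d Lx Lxb i := by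
  obtain ⟨B₁, hB₁, hcard₁, hsum₁⟩ := exists_subset_card_eq_sum_le
    (filter_subset_filter P (subset_univ Y))
    (fun i _ h => le_levelScenario_of_lt h (hhi i)) (fun i _ h => levelScenario_le_of_gt h (hlo i))
    hLx.ge
  obtain ⟨B₂, hB₂, hcard₂, hsum₂⟩ := exists_subset_card_eq_sum_le
    (filter_subset_filter (¬P ·) (subset_univ Y))
    (fun i _ h => le_levelScenario_of_lt h (hhi i)) (fun i _ h => levelScenario_le_of_gt h (hlo i))
    hLxb.ge
  have hdisj : Disjoint B₁ B₂ :=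
    (disjoint_filter_filter_not univ univ P).mono hB₁ hB₂
  have hfilter : {i ∈ B₁ ∪ B₂ | P i} = B₁ := by
    rw [filter_union, filter_true_of_mem fun i hi => (mem_filter.1 (hB₁ hi)).2,
      filter_false_of_mem fun i hi => (mem_filter.1 (hB₂ hi)).2, union_empty]
  refine ⟨B₁ ∪ B₂, ?_, by rw [hfilter, hcard₁], ?_⟩
  · rw [card_union_of_disjoint hdisj, hcard₁, hcard₂, card_filter_add_card_filter_not]
  · unfold compatScenario
    rw [sum_union hdisj, sum_ite]
    exact add_le_add hsum₁ hsum₂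

end Compatible

section Recovery

variable {n p k : ℕ}

lemma bounds_of_mem_Uc {cl d c : Fin n → ℝ} {Γ : ℝ} (hc : c ∈ Uc n cl d Γ) :
    (∀ i, cl i ≤ c i) ∧ ∀ i, c i ≤ cl i + d i := by
  obtain ⟨δ, hδ, -, rfl⟩ := hc
  exact ⟨fun i => by linarith [(hδ i).1], fun i => by linarith [(hδ i).2]⟩

lemma mem_Uc_of_sum_eq {cl d c c' : Fin n → ℝ} {Γ : ℝ} (hc : c ∈ Uc n cl d Γ)
    (hlo : ∀ i, cl i ≤ c' i) (hhi : ∀ i, c' i ≤ cl i + d i)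
    (hsum : ∑ i, c' i = ∑ i, c i) :
    c' ∈ Uc n cl d Γ := by
  obtain ⟨δ, -, hδΓ, rfl⟩ := hc
  refine ⟨fun i => c' i - cl i, fun i => ⟨by linarith [hlo i], by linarith [hhi i]⟩, ?_,
    by simp⟩
  rw [sum_sub_distrib, hsum, sum_add_distrib]
  linarith

lemma eq_indicator_of_zero_or_one {y : Fin n → ℝ} (hy : ∀ i, y i = 0 ∨ y i = 1) :
    y = fun i => if i ∈ ({i | y i = 1} : Finset (Fin n)) then 1 else 0 := by
  funext i
  rcases hy i with h | h <;> simp [h]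

lemma sum_mul_indicator (f : Fin n → ℝ) (Y : Finset (Fin n)) :
    ∑ i, f i * (if i ∈ Y then 1 else 0) = ∑ i ∈ Y, f i := by
  simp only [mul_ite, mul_one, mul_zero, sum_ite_mem, univ_inter]

lemma indicator_mem_selPhiK_iff {x : Fin n → ℝ} (hx : ∀ i, x i = 0 ∨ x i = 1)
    (Y : Finset (Fin n)) :
    (fun i => if i ∈ Y then 1 else 0) ∈ selPhiK n p k x ↔
      #Y = p ∧ (p : ℝ) - k ≤ #{i ∈ Y | x i = 1} := by
  have hsum : ∑ i, (if i ∈ Y then (1 : ℝ) else 0) = #Y := by simp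
  have hover : ∑ i, x i * (if i ∈ Y then 1 else 0) = #{i ∈ Y | x i = 1} := by
    rw [sum_mul_indicator, ← sum_boole]
    exact sum_congr rfl fun i _ => by rcases hx i with h | h <;> simp [h]
  simp only [selPhiK, Set.mem_ofPred_eq, hsum, hover, Nat.cast_inj]
  exact ⟨fun h => h.2, fun h => ⟨fun i => by split_ifs <;> simp, h⟩⟩

lemma incVal_selPhiK_le {x c c' : Fin n → ℝ} (hx : ∀ i, x i = 0 ∨ x i = 1)
    (hc : ∀ i, 0 ≤ c i)
    (h : ∀ Y : Finset (Fin n), ∃ B : Finset (Fin n), #B = #Y ∧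
      #{i ∈ B | x i = 1} = #{i ∈ Y | x i = 1} ∧ ∑ i ∈ B, c i ≤ ∑ i ∈ Y, c' i) :
    incVal n (selPhiK n p k x) c ≤ incVal n (selPhiK n p k x) c' := by
  rcases (selPhiK n p k x).eq_empty_or_nonempty with hS | ⟨y, hy⟩
  · simp [incVal, hS]
  have hbdd : BddBelow {v | ∃ y ∈ selPhiK n p k x, v = ∑ i, c i * y i} := by
    refine ⟨0, ?_⟩
    rintro _ ⟨y, hy, rfl⟩
    exact sum_nonneg fun i _ => mul_nonneg (hc i) (by rcases hy.1 i with h | h <;> simp [h])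
  refine le_csInf ⟨_, y, hy, rfl⟩ ?_
  rintro _ ⟨y', hy', rfl⟩
  obtain ⟨Y, rfl⟩ : ∃ Y : Finset (Fin n), (fun i => if i ∈ Y then 1 else 0) = y' :=
    ⟨_, (eq_indicator_of_zero_or_one hy'.1).symm⟩
  obtain ⟨B, hcard, hover, hsum⟩ := h Y
  have hB : (fun i => if i ∈ B then 1 else 0) ∈ selPhiK n p k x := by
    rw [indicator_mem_selPhiK_iff hx, hcard, hover]
    exact (indicator_mem_selPhiK_iff hx Y).1 hy'
  calc incVal n (selPhiK n p k x) c ≤ ∑ i, c i * (if i ∈ B then 1 else 0) :=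
        csInf_le hbdd ⟨_, hB, rfl⟩
    _ ≤ ∑ i, c' i * (if i ∈ Y then 1 else 0) := by
        rw [sum_mul_indicator, sum_mul_indicator]
        exact hsum

end Recovery

theorem stmt18_general (n p k : ℕ)
    (x : Fin n → ℝ) (hx : x ∈ selPhi n p)
    (cl d : Fin n → ℝ) (hcl : ∀ i, 0 ≤ cl i) (hd : ∀ i, 0 ≤ d i)
    (Γ : ℝ)
    (c : Fin n → ℝ) (hc : c ∈ Uc n cl d Γ) :
    ∃ Lx Lxb : ℝ,
      (fun i => if x i = 1 then max (cl i) (min (cl i + d i) Lx)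
                else max (cl i) (min (cl i + d i) Lxb)) ∈ Uc n cl d Γ ∧
      incVal n (selPhiK n p k x) c ≤
        incVal n (selPhiK n p k x)
          (fun i => if x i = 1 then max (cl i) (min (cl i + d i) Lx)
                    else max (cl i) (min (cl i + d i) Lxb)) := by
  obtain ⟨hlo, hhi⟩ := bounds_of_mem_Uc hc
  obtain ⟨Lx, hLx⟩ := exists_sum_levelScenario_eq {i | x i = 1} (fun i _ => hd i)
    (sum_le_sum fun i _ => hlo i) (sum_le_sum fun i _ => hhi i)
  obtain ⟨Lxb, hLxb⟩ := exists_sum_levelScenario_eq {i | ¬x i = 1} (fun i _ => hd i)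
    (sum_le_sum fun i _ => hlo i) (sum_le_sum fun i _ => hhi i)
  exact ⟨Lx, Lxb,
    mem_Uc_of_sum_eq (c' := compatScenario (x · = 1) cl d Lx Lxb) hc le_compatScenario
      (fun i => compatScenario_le (hd i)) (sum_compatScenario hLx hLxb),
    incVal_selPhiK_le hx.1 (fun i => (hcl i).trans (hlo i))
      (exists_card_eq_sum_le_compatScenario hlo hhi hLx hLxb)⟩

/-- Lemma 10: every scenario of `U^c` can be replaced by an
`(L_x, L_x̄)`-compatible scenario in `U^c` whose incremental value is no lower. -/
theorem stmt18 (n p k : ℕ) (hp1 : 1 ≤ p) (hpn : p ≤ n) (hk : k ≤ p)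
    (x : Fin n → ℝ) (hx : x ∈ selPhi n p)
    (cl d : Fin n → ℝ) (hcl : ∀ i, 0 ≤ cl i) (hd : ∀ i, 0 ≤ d i)
    (Γ : ℝ) (hΓ : 0 ≤ Γ)
    (c : Fin n → ℝ) (hc : c ∈ Uc n cl d Γ) :
    ∃ Lx Lxb : ℝ,
      (fun i => if x i = 1 then max (cl i) (min (cl i + d i) Lx)
                else max (cl i) (min (cl i + d i) Lxb)) ∈ Uc n cl d Γ ∧
      incVal n (selPhiK n p k x) c ≤
        incVal n (selPhiK n p k x)
          (fun i => if x i = 1 then max (cl i) (min (cl i + d i) Lx)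
                    else max (cl i) (min (cl i + d i) Lxb)) :=
  stmt18_general n p k x hx cl d hcl hd Γ c hc
end
end
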